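/- arXiv:1803.07693 — 6 statements merged into one kernel-verified Lean document; each statement's English description precedes it below -/
import Mathlib

section
/- Let m and n be integers with 7 ≤ m ≤ n and n even. Then there exists a valid black-white coloring (B,W) of the m×n knight chessboard with |B| = |W| = m(n−2)/2. -/
/-- A square `p = (i,j)` is on the `m × n` board if `1 ≤ i ≤ m` and `1 ≤ j ≤ n`. -/
def OnBoard (m n : ℕ) (p : ℕ × ℕ) : Prop :=
  1 ≤ p.1 ∧ p.1 ≤ m ∧ 1 ≤ p.2 ∧ p.2 ≤ n

/-- Two squares attack each other as knights iff `{|i-i'|,|j-j'|} = {1,2}`. -/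
def KnightAttack (p q : ℕ × ℕ) : Prop :=
  (Nat.dist p.1 q.1 = 1 ∧ Nat.dist p.2 q.2 = 2) ∨
  (Nat.dist p.1 q.1 = 2 ∧ Nat.dist p.2 q.2 = 1)

instance : DecidableRel KnightAttack := fun p q => by
  unfold KnightAttack; infer_instance

/-- A valid black-white coloring of the `m × n` knight chessboard: two disjoint
sets of squares on the board such that no black square attacks a white square. -/
def ValidBW (m n : ℕ) (B W : Finset (ℕ × ℕ)) : Prop :=
  (∀ p ∈ B, OnBoard m n p) ∧ (∀ p ∈ W, OnBoard m n p) ∧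
  Disjoint B W ∧ ∀ p ∈ B, ∀ q ∈ W, ¬ KnightAttack p q

/-- The part of a set of squares lying in column `k`. -/
def col (B : Finset (ℕ × ℕ)) (k : ℕ) : Finset (ℕ × ℕ) :=
  B.filter (fun p => p.2 = k)

/-- Column `k` is full w.r.t. `B`: every square of column `k` lies in `B`. -/
def FullCol (m : ℕ) (B : Finset (ℕ × ℕ)) (k : ℕ) : Prop :=
  ∀ i, 1 ≤ i → i ≤ m → (i, k) ∈ B

/-- Column `k` is almost full w.r.t. `B`: at least `m - 2` of its squares lie in `B`. -/
def AlmostFullCol (m : ℕ) (B : Finset (ℕ × ℕ)) (k : ℕ) : Prop :=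
  m - 2 ≤ (col B k).card

/-- Column `k` is compact w.r.t. `B`: `B ∩ column k = {(1,k),…,(b_k,k)}`. -/
def CompactCol (B : Finset (ℕ × ℕ)) (k : ℕ) : Prop :=
  col B k = (Finset.Icc 1 (col B k).card).image (fun i => (i, k))
theorem stmt0 (m n : ℕ) (hm : 7 ≤ m) (hmn : m ≤ n) (hn : Even n) :
    ∃ B W : Finset (ℕ × ℕ), ValidBW m n B W ∧
      B.card = m * (n - 2) / 2 ∧ W.card = m * (n - 2) / 2 := by

  obtain ⟨k, hk⟩ := hn
  refine ⟨Finset.Icc 1 m ×ˢ Finset.Icc 1 (k-1), Finset.Icc 1 m ×ˢ Finset.Icc (k+2) n, ?_, ?_, ?_⟩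
  · refine ⟨?_, ?_, ?_, ?_⟩
    · rintro ⟨i, j⟩ hp
      simp only [Finset.mem_product, Finset.mem_Icc] at hp
      exact ⟨hp.1.1, hp.1.2, hp.2.1, by omega⟩
    · rintro ⟨i, j⟩ hp
      simp only [Finset.mem_product, Finset.mem_Icc] at hp
      exact ⟨hp.1.1, hp.1.2, by omega, hp.2.2⟩
    · rw [Finset.disjoint_left]
      rintro ⟨i, j⟩ hp hq
      simp only [Finset.mem_product, Finset.mem_Icc] at hp hq
      omega
    · rintro ⟨i, j⟩ hp ⟨i', j'⟩ hq hatt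
      simp only [Finset.mem_product, Finset.mem_Icc] at hp hq
      rcases hatt with ⟨_, h2⟩ | ⟨_, h2⟩ <;> simp [Nat.dist] at h2 <;> omega
  · rw [Finset.card_product, Nat.card_Icc, Nat.card_Icc]
    rw [show m + 1 - 1 = m from by omega, show k - 1 + 1 - 1 = k - 1 from by omega,
      show n - 2 = (k - 1) * 2 from by omega, ← Nat.mul_assoc,
      Nat.mul_div_cancel _ (by norm_num)]
  · rw [Finset.card_product, Nat.card_Icc, Nat.card_Icc]
    rw [show m + 1 - 1 = m from by omega, show n + 1 - (k + 2) = k - 1 from by omega,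
      show n - 2 = (k - 1) * 2 from by omega, ← Nat.mul_assoc,
      Nat.mul_div_cancel _ (by norm_num)]
end

section
/- Let m and n be integers with 7 ≤ m ≤ n and n odd. Then there exists a valid black-white coloring (B,W) of the m×n knight chessboard with |B| = |W| = m(n−3)/2 + ⌈m/2⌉. -/
/-!
Write `n = 2k + 3`. Colour the first `k` columns black and the last `k` columns white, leave
the middle column empty, and add the odd rows of the two columns next to it, black on the left
and white on the right. A knight moves at most two columns, so the only possible attack would
go between these two partial columns, two columns apart; but a knight move always changes the
parity of `i + j`, while two odd-row squares two columns apart have the same parity.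
-/

namespace KnightAttack

variable {p q : ℕ × ℕ}

theorem odd_add (h : KnightAttack p q) : Odd (p.1 + p.2 + (q.1 + q.2)) := by
  rw [Nat.odd_iff]
  unfold KnightAttack Nat.dist at h
  omega

theorem dist_snd_le_two (h : KnightAttack p q) : Nat.dist p.2 q.2 ≤ 2 := by
  unfold KnightAttack at h
  omega

end KnightAttack

def oddRowsOfCol (m j : ℕ) : Finset (ℕ × ℕ) :=
  (Finset.range ((m + 1) / 2)).image fun i => (2 * i + 1, j)

theorem card_oddRowsOfCol (m j : ℕ) : (oddRowsOfCol m j).card = (m + 1) / 2 := by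
  rw [oddRowsOfCol, Finset.card_image_of_injective _ fun a b hab => by simp_all, Finset.card_range]

theorem of_mem_oddRowsOfCol {m j : ℕ} {p : ℕ × ℕ} (hp : p ∈ oddRowsOfCol m j) :
    Odd p.1 ∧ 1 ≤ p.1 ∧ p.1 ≤ m ∧ p.2 = j := by
  obtain ⟨i, hi, rfl⟩ := Finset.mem_image.1 hp
  rw [Finset.mem_range] at hi
  exact ⟨odd_two_mul_add_one i, by omega, by omega, rfl⟩

section Coloring

variable (m k : ℕ)

def blackSquares : Finset (ℕ × ℕ) :=
  Finset.Icc 1 m ×ˢ Finset.Icc 1 k ∪ oddRowsOfCol m (k + 1)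

def whiteSquares : Finset (ℕ × ℕ) :=
  Finset.Icc 1 m ×ˢ Finset.Icc (k + 4) (2 * k + 3) ∪ oddRowsOfCol m (k + 3)

variable {m k}

theorem of_mem_blackSquares {p : ℕ × ℕ} (hp : p ∈ blackSquares m k) :
    OnBoard m (2 * k + 3) p ∧ (p.2 ≤ k ∨ p.2 = k + 1 ∧ Odd p.1) := by
  rcases Finset.mem_union.1 hp with hp | hp
  · simp only [Finset.mem_product, Finset.mem_Icc] at hp
    exact ⟨⟨hp.1.1, hp.1.2, hp.2.1, by omega⟩, Or.inl hp.2.2⟩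
  · obtain ⟨hodd, h1, h2, h3⟩ := of_mem_oddRowsOfCol hp
    exact ⟨⟨h1, h2, by omega, by omega⟩, Or.inr ⟨h3, hodd⟩⟩

theorem of_mem_whiteSquares {p : ℕ × ℕ} (hp : p ∈ whiteSquares m k) :
    OnBoard m (2 * k + 3) p ∧ (k + 4 ≤ p.2 ∨ p.2 = k + 3 ∧ Odd p.1) := by
  rcases Finset.mem_union.1 hp with hp | hp
  · simp only [Finset.mem_product, Finset.mem_Icc] at hp
    exact ⟨⟨hp.1.1, hp.1.2, by omega, hp.2.2⟩, Or.inl hp.2.1⟩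
  · obtain ⟨hodd, h1, h2, h3⟩ := of_mem_oddRowsOfCol hp
    exact ⟨⟨h1, h2, by omega, by omega⟩, Or.inr ⟨h3, hodd⟩⟩

theorem validBW_blackSquares_whiteSquares :
    ValidBW m (2 * k + 3) (blackSquares m k) (whiteSquares m k) := by
  refine ⟨fun p hp => (of_mem_blackSquares hp).1, fun p hp => (of_mem_whiteSquares hp).1,
    Finset.disjoint_left.2 fun p hpB hpW => ?_, fun p hp q hq hpq => ?_⟩
  · have := (of_mem_blackSquares hpB).2
    have := (of_mem_whiteSquares hpW).2
    omega
  · have hparity := Nat.odd_iff.1 hpq.odd_add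
    have hgap := hpq.dist_snd_le_two
    unfold Nat.dist at hgap
    rcases (of_mem_blackSquares hp).2 with hp2 | ⟨hp2, a, ha⟩ <;>
      rcases (of_mem_whiteSquares hq).2 with hq2 | ⟨hq2, b, hb⟩ <;> omega

theorem card_blackSquares : (blackSquares m k).card = m * k + (m + 1) / 2 := by
  rw [blackSquares, Finset.card_union_of_disjoint, Finset.card_product, Nat.card_Icc,
    Nat.card_Icc, card_oddRowsOfCol, Nat.add_sub_cancel, Nat.add_sub_cancel]
  refine Finset.disjoint_left.2 fun p hp hp' => ?_
  have := (of_mem_oddRowsOfCol hp').2.2.2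
  simp only [Finset.mem_product, Finset.mem_Icc] at hp
  omega

theorem card_whiteSquares : (whiteSquares m k).card = m * k + (m + 1) / 2 := by
  rw [whiteSquares, Finset.card_union_of_disjoint, Finset.card_product, Nat.card_Icc,
    Nat.card_Icc, card_oddRowsOfCol, Nat.add_sub_cancel, show 2 * k + 3 + 1 - (k + 4) = k by omega]
  refine Finset.disjoint_left.2 fun p hp hp' => ?_
  have := (of_mem_oddRowsOfCol hp').2.2.2
  simp only [Finset.mem_product, Finset.mem_Icc] at hp
  omega

end Coloring

theorem stmt2 (m n : ℕ) (hm : 7 ≤ m) (hmn : m ≤ n) (hn : Odd n) :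
    ∃ B W : Finset (ℕ × ℕ), ValidBW m n B W ∧
      B.card = m * (n - 3) / 2 + (m + 1) / 2 ∧
      W.card = m * (n - 3) / 2 + (m + 1) / 2 := by
  obtain ⟨k, hk⟩ : ∃ k, n = 2 * k + 3 := by
    obtain ⟨t, rfl⟩ := hn
    exact ⟨t - 1, by omega⟩
  have hsize : m * (n - 3) / 2 = m * k := by
    rw [hk, Nat.add_sub_cancel, Nat.mul_left_comm, Nat.mul_div_cancel_left _ two_pos]
  subst hk
  exact ⟨blackSquares m k, whiteSquares m k, validBW_blackSquares_whiteSquares,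
    by rw [card_blackSquares, hsize], by rw [card_whiteSquares, hsize]⟩
end

section
/- Let n ≥ 7 be an odd integer. Then there exists a valid black-white coloring (B,W) of the 3×n knight chessboard with |B| = |W| = 3(n−3)/2 + 2, and every valid black-white coloring (B,W) of the 3×n knight chessboard satisfies min(|B|, |W|) ≤ 3(n−3)/2 + 2. -/
namespace KnightStruct2
def bd (n : ℕ) : Finset (ℕ × ℕ) := (Finset.Icc 1 3) ×ˢ (Finset.Icc 1 n)
lemma mem_bd {n : ℕ} {p : ℕ × ℕ} : p ∈ bd n ↔ (1 ≤ p.1 ∧ p.1 ≤ 3 ∧ 1 ≤ p.2 ∧ p.2 ≤ n) := by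
  simp [bd, Finset.mem_product]; tauto

lemma bd_card (n : ℕ) : (bd n).card = 3 * n := by
  simp [bd, Finset.card_product, Nat.card_Icc]
def zrow (e j : ℕ) : ℕ := if (j + e) % 2 = 0 then 1 else 3
lemma zrow_cases (e j : ℕ) : zrow e j = 1 ∨ zrow e j = 3 := by unfold zrow; split <;> simp
lemma zrow_ne2 (e j : ℕ) : zrow e j ≠ 2 := by rcases zrow_cases e j with h | h <;> omega
lemma zrow_succ_dist (e j : ℕ) : Nat.dist (zrow e j) (zrow e (j+1)) = 2 := by
  unfold zrow
  by_cases h : (j + e) % 2 = 0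
  · have h2 : ¬ ((j + 1 + e) % 2 = 0) := by omega
    simp [h, h2, Nat.dist]
  · have h2 : (j + 1 + e) % 2 = 0 := by omega
    simp [h, h2, Nat.dist]
lemma zrow_opp (e j : ℕ) : zrow e j + zrow (e+1) j = 4 := by
  unfold zrow
  by_cases h : (j + e) % 2 = 0
  · have h2 : ¬ ((j + (e+1)) % 2 = 0) := by omega
    simp [h, h2]
  · have h2 : (j + (e+1)) % 2 = 0 := by omega
    simp [h, h2]
def zA (e j : ℕ) : ℕ × ℕ := (zrow e j, j)
def zM (j : ℕ) : ℕ × ℕ := (2, j)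
lemma zA_mem_bd {n e j : ℕ} (h1 : 1 ≤ j) (h2 : j ≤ n) : zA e j ∈ bd n := by
  rw [mem_bd]; rcases zrow_cases e j with h | h <;> simp [zA, h] <;> omega
lemma zM_mem_bd {n j : ℕ} (h1 : 1 ≤ j) (h2 : j ≤ n) : zM j ∈ bd n := by
  rw [mem_bd]; simp [zM]; omega
lemma zA_ne_zM (e j k : ℕ) : zA e j ≠ zM k := by
  simp only [zA, zM, Ne, Prod.mk.injEq, not_and]
  intro h; exact absurd h (zrow_ne2 e j)
lemma zM_ne_zM {j k : ℕ} (h : j ≠ k) : zM j ≠ zM k := by simp [zM, Prod.mk.injEq, h]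
lemma zA_ne_zA_col {e e' j j' : ℕ} (h : j ≠ j') : zA e j ≠ zA e' j' := by
  simp [zA, Prod.mk.injEq, h]
lemma zA_ne_zA_row {e j : ℕ} : zA e j ≠ zA (e+1) j := by
  have := zrow_opp e j
  have h1 := zrow_cases e j
  simp only [zA, Ne, Prod.mk.injEq, and_true]
  omega
lemma ka_AA (e j : ℕ) : KnightAttack (zA e j) (zA e (j+1)) :=
  Or.inr ⟨zrow_succ_dist e j, by simp [zA, Nat.dist]⟩
lemma ka_MA (e j : ℕ) : KnightAttack (zM j) (zA e (j+2)) := by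
  refine Or.inl ⟨?_, by simp [zM, zA, Nat.dist]⟩
  rcases zrow_cases e (j+2) with h | h <;> simp [zM, zA, h, Nat.dist]
lemma ka_AM (e j : ℕ) : KnightAttack (zA e j) (zM (j+2)) := by
  refine Or.inl ⟨?_, by simp [zM, zA, Nat.dist]⟩
  rcases zrow_cases e j with h | h <;> simp [zM, zA, h, Nat.dist]

def Step (C : Finset (ℕ × ℕ)) (p q : ℕ × ℕ) : Prop := p ∈ C ∧ q ∈ C ∧ KnightAttack p q
def Conn (C : Finset (ℕ × ℕ)) (p q : ℕ × ℕ) : Prop := Relation.EqvGen (Step C) p q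
lemma conn_step {C : Finset (ℕ×ℕ)} {p q : ℕ × ℕ} (h1 : p ∈ C) (h2 : q ∈ C)
    (ha : KnightAttack p q) : Conn C p q := Relation.EqvGen.rel _ _ ⟨h1, h2, ha⟩
lemma conn_symm {C : Finset (ℕ×ℕ)} {p q : ℕ × ℕ} (h : Conn C p q) : Conn C q p :=
  Relation.EqvGen.symm _ _ h
lemma conn_trans {C : Finset (ℕ×ℕ)} {p q r : ℕ × ℕ} (h1 : Conn C p q) (h2 : Conn C q r) :
    Conn C p r := Relation.EqvGen.trans _ _ _ h1 h2

section Main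
variable {n : ℕ} {C : Finset (ℕ × ℕ)}

lemma not4 (hmiss : (bd n \ C).card ≤ 3) {p1 p2 p3 p4 : ℕ × ℕ}
    (h1 : p1 ∈ bd n \ C) (h2 : p2 ∈ bd n \ C) (h3 : p3 ∈ bd n \ C) (h4 : p4 ∈ bd n \ C)
    (d12 : p1 ≠ p2) (d13 : p1 ≠ p3) (d14 : p1 ≠ p4)
    (d23 : p2 ≠ p3) (d24 : p2 ≠ p4) (d34 : p3 ≠ p4) : False := by
  have hsub : {p1, p2, p3, p4} ⊆ bd n \ C := by
    intro x hx; simp only [Finset.mem_insert, Finset.mem_singleton] at hx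
    rcases hx with rfl | rfl | rfl | rfl <;> assumption
  have hc : ({p1, p2, p3, p4} : Finset (ℕ×ℕ)).card = 4 := by
    rw [Finset.card_insert_of_notMem (by simp [d12, d13, d14]),
        Finset.card_insert_of_notMem (by simp [d23, d24]),
        Finset.card_insert_of_notMem (by simp [d34]), Finset.card_singleton]
  have := Finset.card_le_card hsub
  omega

/-- path along a zigzag -/
lemma conn_path (e : ℕ) (l : ℕ) : ∀ r, l ≤ r → 1 ≤ l → r ≤ n →
    (∀ j, l ≤ j → j ≤ r → zA e j ∈ C) → Conn C (zA e l) (zA e r) := by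
  intro r
  induction r with
  | zero => intro h1 h2 _ _; exact absurd h1 (by omega)
  | succ r ih =>
    intro hlr hl hr hall
    rcases Nat.lt_or_ge l (r+1) with h | h
    · have hr' : l ≤ r := by omega
      have step : Conn C (zA e r) (zA e (r+1)) :=
        conn_step (hall r hr' (by omega)) (hall (r+1) (by omega) le_rfl) (ka_AA e r)
      exact conn_trans (ih hr' hl (by omega) (fun j hj1 hj2 => hall j hj1 (by omega))) step
    · have : l = r + 1 := by omega
      subst this; exact Relation.EqvGen.refl _

/-- classify board squares -/
lemma classify (e : ℕ) {q : ℕ × ℕ} (hq : q ∈ bd n) :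
    (∃ k, 1 ≤ k ∧ k ≤ n ∧ q = zM k) ∨ (∃ k, 1 ≤ k ∧ k ≤ n ∧ q = zA e k) ∨
    (∃ k, 1 ≤ k ∧ k ≤ n ∧ q = zA (e+1) k) := by
  rw [mem_bd] at hq
  obtain ⟨h1, h2, h3, h4⟩ := hq
  rcases q with ⟨r, k⟩
  dsimp at h1 h2 h3 h4
  by_cases hr : r = 2
  · exact Or.inl ⟨k, h3, h4, by simp [zM, hr]⟩
  · right
    have ho := zrow_opp e k
    have hc := zrow_cases e k
    by_cases hre : zrow e k = r
    · exact Or.inl ⟨k, h3, h4, by simp [zA, hre]⟩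
    · refine Or.inr ⟨k, h3, h4, ?_⟩
      simp only [zA, Prod.mk.injEq, and_true]
      omega
end Main

section CaseA
variable {n : ℕ} {C : Finset (ℕ × ℕ)}

lemma card4le {α : Type*} [DecidableEq α] (a b c d : α) : ({a,b,c,d} : Finset α).card ≤ 4 := by
  have h1 := Finset.card_insert_le a ({b,c,d} : Finset α)
  have h2 := Finset.card_insert_le b ({c,d} : Finset α)
  have h3 := Finset.card_insert_le c ({d} : Finset α)
  have h4 : ({d} : Finset α).card = 1 := Finset.card_singleton d
  omega

lemma card5le {α : Type*} [DecidableEq α] (a b c d f : α) :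
    ({a,b,c,d,f} : Finset α).card ≤ 5 := by
  have h1 := Finset.card_insert_le a ({b,c,d,f} : Finset α)
  have h2 := card4le b c d f
  omega

lemma card7le {α : Type*} [DecidableEq α] (a b c d f g h : α) :
    ({a,b,c,d,f,g,h} : Finset α).card ≤ 7 := by
  have h1 := Finset.card_insert_le a ({b,c,d,f,g,h} : Finset α)
  have h2 := Finset.card_insert_le b ({c,d,f,g,h} : Finset α)
  have h3 := card5le c d f g h
  omega

lemma card8le {α : Type*} [DecidableEq α] (a b c d f g h i : α) :
    ({a,b,c,d,f,g,h,i} : Finset α).card ≤ 8 := by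
  have h1 := Finset.card_insert_le a ({b,c,d,f,g,h,i} : Finset α)
  have h2 := card7le b c d f g h i
  omega

lemma caseA (hn : 7 ≤ n) (hC : C ⊆ bd n) (hmiss : (bd n \ C).card ≤ 3) (e : ℕ)
    (hall : ∀ j, 1 ≤ j → j ≤ n → zA e j ∈ C) :
    ∃ p₀ ∈ C, ∃ Z : Finset (ℕ × ℕ), Z.card ≤ 8 ∧ ∀ q ∈ C, q ∉ Z → Conn C p₀ q := by
  set p₀ := zA e 1 with hp₀
  have hp₀C : p₀ ∈ C := hall 1 le_rfl (by omega)
  refine ⟨p₀, hp₀C, {zA (e+1) 1, zA (e+1) 2, zA (e+1) (n-1), zA (e+1) n}, ?_, ?_⟩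
  · exact le_trans (card4le _ _ _ _) (by omega)
  have connA : ∀ j, 1 ≤ j → j ≤ n → Conn C p₀ (zA e j) := by
    intro j h1 h2
    exact conn_path e 1 j h1 le_rfl h2 (fun i hi1 hi2 => hall i hi1 (le_trans hi2 h2))
  have connM : ∀ k, 1 ≤ k → k ≤ n → zM k ∈ C → Conn C p₀ (zM k) := by
    intro k h1 h2 hkC
    rcases Nat.lt_or_ge k 3 with h | h
    · -- use contact at k+2
      have h4 : k + 2 ≤ n := by omega
      refine conn_trans (connA (k+2) (by omega) h4) ?_
      exact conn_symm (conn_step hkC (hall (k+2) (by omega) h4) (ka_MA e k))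
    · -- use contact at k-2
      have hrw : k - 2 + 2 = k := by omega
      have ha := ka_AM e (k-2)
      rw [hrw] at ha
      refine conn_trans (connA (k-2) (by omega) (by omega)) ?_
      exact conn_step (hall (k-2) (by omega) (by omega)) hkC ha
  have connB : ∀ k, 3 ≤ k → k ≤ n-2 → zA (e+1) k ∈ C → Conn C p₀ (zA (e+1) k) := by
    intro k h1 h2 hkC
    by_cases hM1 : zM (k-2) ∈ C
    · have hrw : k - 2 + 2 = k := by omega
      have ha := ka_MA (e+1) (k-2)
      rw [hrw] at ha
      exact conn_trans (connM (k-2) (by omega) (by omega) hM1) (conn_step hM1 hkC ha)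
    by_cases hM2 : zM (k+2) ∈ C
    · have ha := ka_AM (e+1) k
      exact conn_trans (connM (k+2) (by omega) (by omega) hM2)
        (conn_symm (conn_step hkC hM2 ha))
    -- both middles missing
    by_cases hx : zA (e+1) (k+1) ∈ C ∧ zM (k-1) ∈ C
    · obtain ⟨hx1, hx2⟩ := hx
      have hrw : k - 1 + 2 = k + 1 := by omega
      have ha1 := ka_MA e (k-1); rw [hrw] at ha1
      have ha2 := ka_MA (e+1) (k-1); rw [hrw] at ha2
      have ha3 := ka_AA (e+1) k
      refine conn_trans (connA (k+1) (by omega) (by omega)) ?_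
      refine conn_trans (conn_symm (conn_step hx2 (hall (k+1) (by omega) (by omega)) ha1)) ?_
      refine conn_trans (conn_step hx2 hx1 ha2) ?_
      exact conn_symm (conn_step hkC hx1 ha3)
    by_cases hy : zA (e+1) (k-1) ∈ C ∧ zM (k+1) ∈ C
    · obtain ⟨hy1, hy2⟩ := hy
      have hrw : k - 1 + 2 = k + 1 := by omega
      have ha1 := ka_AM e (k-1); rw [hrw] at ha1
      have ha2 := ka_AM (e+1) (k-1); rw [hrw] at ha2
      have hrw2 : k - 1 + 1 = k := by omega
      have ha3 := ka_AA (e+1) (k-1); rw [hrw2] at ha3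
      refine conn_trans (connA (k-1) (by omega) (by omega)) ?_
      refine conn_trans (conn_step (hall (k-1) (by omega) (by omega)) hy2 ha1) ?_
      refine conn_trans (conn_symm (conn_step hy1 hy2 ha2)) ?_
      exact conn_step hy1 hkC ha3
    -- contradiction: four distinct missing squares
    exfalso
    have hm1 : zM (k-2) ∈ bd n \ C :=
      Finset.mem_sdiff.mpr ⟨zM_mem_bd (by omega) (by omega), hM1⟩
    have hm2 : zM (k+2) ∈ bd n \ C :=
      Finset.mem_sdiff.mpr ⟨zM_mem_bd (by omega) (by omega), hM2⟩
    rw [not_and_or] at hx hy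
    have hx' : (zA (e+1) (k+1) ∈ bd n \ C) ∨ (zM (k-1) ∈ bd n \ C) := by
      rcases hx with h | h
      · exact Or.inl (Finset.mem_sdiff.mpr ⟨zA_mem_bd (by omega) (by omega), h⟩)
      · exact Or.inr (Finset.mem_sdiff.mpr ⟨zM_mem_bd (by omega) (by omega), h⟩)
    have hy' : (zA (e+1) (k-1) ∈ bd n \ C) ∨ (zM (k+1) ∈ bd n \ C) := by
      rcases hy with h | h
      · exact Or.inl (Finset.mem_sdiff.mpr ⟨zA_mem_bd (by omega) (by omega), h⟩)
      · exact Or.inr (Finset.mem_sdiff.mpr ⟨zM_mem_bd (by omega) (by omega), h⟩)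
    rcases hx' with hx' | hx' <;> rcases hy' with hy' | hy'
    · exact not4 hmiss hm1 hm2 hx' hy' (zM_ne_zM (by omega)) ((zA_ne_zM _ _ _).symm)
        ((zA_ne_zM _ _ _).symm) ((zA_ne_zM _ _ _).symm) ((zA_ne_zM _ _ _).symm)
        (zA_ne_zA_col (by omega))
    · exact not4 hmiss hm1 hm2 hx' hy' (zM_ne_zM (by omega)) ((zA_ne_zM _ _ _).symm)
        (zM_ne_zM (by omega)) ((zA_ne_zM _ _ _).symm) (zM_ne_zM (by omega))
        (zA_ne_zM _ _ _)
    · exact not4 hmiss hm1 hm2 hx' hy' (zM_ne_zM (by omega)) (zM_ne_zM (by omega))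
        ((zA_ne_zM _ _ _).symm) (zM_ne_zM (by omega)) ((zA_ne_zM _ _ _).symm)
        ((zA_ne_zM _ _ _).symm)
    · exact not4 hmiss hm1 hm2 hx' hy' (zM_ne_zM (by omega)) (zM_ne_zM (by omega))
        (zM_ne_zM (by omega)) (zM_ne_zM (by omega)) (zM_ne_zM (by omega))
        (zM_ne_zM (by omega))
  -- final assembly
  intro q hq hqZ
  rcases classify e (hC hq) with ⟨k, h1, h2, rfl⟩ | ⟨k, h1, h2, rfl⟩ | ⟨k, h1, h2, rfl⟩
  · exact connM k h1 h2 hq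
  · exact connA k h1 h2
  · rcases Nat.lt_or_ge k 3 with h | h
    · exfalso; apply hqZ
      have : k = 1 ∨ k = 2 := by omega
      rcases this with rfl | rfl <;> simp
    rcases Nat.lt_or_ge (n-2) k with h' | h'
    · exfalso; apply hqZ
      have : k = n - 1 ∨ k = n := by omega
      rcases this with rfl | rfl <;> simp
    · exact connB k h h' hq

end CaseA

section CaseB
variable {n : ℕ} {C : Finset (ℕ × ℕ)}

lemma ne_breaks {e s t : ℕ} : zA e s ≠ zA (e+1) t := by
  rcases eq_or_ne s t with rfl | h
  · exact zA_ne_zA_row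
  · exact zA_ne_zA_col h

/-- in the one-break setting, at most one middle can be missing -/
lemma midOr (hmiss : (bd n \ C).card ≤ 3) {e s t : ℕ}
    (hsbd : zA e s ∈ bd n \ C) (htbd : zA (e+1) t ∈ bd n \ C)
    {k1 k2 : ℕ} (h11 : 1 ≤ k1) (h12 : k1 ≤ n) (h21 : 1 ≤ k2) (h22 : k2 ≤ n)
    (hne : k1 ≠ k2) : zM k1 ∈ C ∨ zM k2 ∈ C := by
  by_contra h
  push_neg at h
  obtain ⟨hm1, hm2⟩ := h
  exact not4 hmiss hsbd htbd (Finset.mem_sdiff.mpr ⟨zM_mem_bd h11 h12, hm1⟩)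
    (Finset.mem_sdiff.mpr ⟨zM_mem_bd h21 h22, hm2⟩) ne_breaks
    (zA_ne_zM _ _ _) (zA_ne_zM _ _ _) (zA_ne_zM _ _ _) (zA_ne_zM _ _ _) (zM_ne_zM hne)

/-- with a third identified missing square, everything else is colored -/
lemma inC3 (hmiss : (bd n \ C).card ≤ 3) {e s t : ℕ}
    (hsbd : zA e s ∈ bd n \ C) (htbd : zA (e+1) t ∈ bd n \ C)
    {u3 : ℕ × ℕ} (hu3 : u3 ∈ bd n \ C) (h31 : u3 ≠ zA e s) (h32 : u3 ≠ zA (e+1) t)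
    {q : ℕ × ℕ} (hq : q ∈ bd n) (q1 : q ≠ zA e s) (q2 : q ≠ zA (e+1) t) (q3 : q ≠ u3) :
    q ∈ C := by
  by_contra h
  exact not4 hmiss hsbd htbd hu3 (Finset.mem_sdiff.mpr ⟨hq, h⟩) ne_breaks h31.symm q1.symm
    h32.symm q2.symm q3.symm

lemma caseBI (hn : 7 ≤ n) (hC : C ⊆ bd n) (hmiss : (bd n \ C).card ≤ 3) (e s t : ℕ)
    (hs4 : 4 ≤ s) (hsn : s ≤ n - 3) (hs : zA e s ∉ C)
    (hone : ∀ j, 1 ≤ j → j ≤ n → j ≠ s → zA e j ∈ C)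
    (ht1 : 1 ≤ t) (htn : t ≤ n) (htm : zA (e+1) t ∉ C) :
    ∃ p₀ ∈ C, ∃ Z : Finset (ℕ × ℕ), Z.card ≤ 8 ∧ ∀ q ∈ C, q ∉ Z → Conn C p₀ q := by
  have hsbd : zA e s ∈ bd n \ C :=
    Finset.mem_sdiff.mpr ⟨zA_mem_bd (by omega) (by omega), hs⟩
  have htbd : zA (e+1) t ∈ bd n \ C :=
    Finset.mem_sdiff.mpr ⟨zA_mem_bd ht1 htn, htm⟩
  set p₀ := zA e 1 with hp₀
  have hp₀C : p₀ ∈ C := hone 1 le_rfl (by omega) (by omega)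
  refine ⟨p₀, hp₀C, {zA (e+1) s, zM (s-2), zM (s+2), zA (e+1) 1, zA (e+1) 2,
      zA (e+1) (n-1), zA (e+1) n}, le_trans (card7le _ _ _ _ _ _ _) (by omega), ?_⟩
  -- backbone: left part
  have connL : ∀ j, 1 ≤ j → j ≤ s - 1 → Conn C p₀ (zA e j) := by
    intro j h1 h2
    exact conn_path (n := n) e 1 j h1 le_rfl (by omega)
      (fun i hi1 hi2 => hone i hi1 (by omega) (by omega))
  -- backbone: right part
  have connRfrom : ∀ jr, s + 1 ≤ jr → jr ≤ n → Conn C p₀ (zA e jr) →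
      ∀ j, s + 1 ≤ j → j ≤ n → Conn C p₀ (zA e j) := by
    intro jr hjr1 hjr2 hbase j hj1 hj2
    rcases le_total jr j with h | h
    · exact conn_trans hbase (conn_path e jr j h (by omega) hj2
        (fun i hi1 hi2 => hone i (by omega) (by omega) (by omega)))
    · exact conn_trans hbase (conn_symm (conn_path e j jr h (by omega) hjr2
        (fun i hi1 hi2 => hone i (by omega) (by omega) (by omega))))
  have connR : ∀ j, s + 1 ≤ j → j ≤ n → Conn C p₀ (zA e j) := by
    rcases midOr hmiss hsbd htbd (k1 := s-1) (k2 := s+1) (by omega) (by omega) (by omega)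
        (by omega) (by omega) with hM | hM
    · -- bridge A(s-3) - M(s-1) - A(s+1)
      have hrw1 : s - 3 + 2 = s - 1 := by omega
      have ha1 := ka_AM e (s-3); rw [hrw1] at ha1
      have hrw2 : s - 1 + 2 = s + 1 := by omega
      have ha2 := ka_MA e (s-1); rw [hrw2] at ha2
      have hA1 : zA e (s-3) ∈ C := hone _ (by omega) (by omega) (by omega)
      have hA2 : zA e (s+1) ∈ C := hone _ (by omega) (by omega) (by omega)
      have hbase : Conn C p₀ (zA e (s+1)) :=
        conn_trans (connL (s-3) (by omega) (by omega))
          (conn_trans (conn_step hA1 hM ha1) (conn_step hM hA2 ha2))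
      exact connRfrom (s+1) (by omega) (by omega) hbase
    · -- bridge A(s-1) - M(s+1) - A(s+3)
      have ha1 := ka_AM e (s-1)
      have hrw1 : s - 1 + 2 = s + 1 := by omega
      rw [hrw1] at ha1
      have ha2 := ka_MA e (s+1)
      have hA1 : zA e (s-1) ∈ C := hone _ (by omega) (by omega) (by omega)
      have hA2 : zA e (s+3) ∈ C := hone _ (by omega) (by omega) (by omega)
      have hbase : Conn C p₀ (zA e (s+3)) :=
        conn_trans (connL (s-1) (by omega) (by omega))
          (conn_trans (conn_step hA1 hM ha1) (conn_step hM hA2 ha2))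
      exact connRfrom (s+3) (by omega) (by omega) hbase
  have connA : ∀ j, 1 ≤ j → j ≤ n → j ≠ s → Conn C p₀ (zA e j) := by
    intro j h1 h2 h3
    rcases Nat.lt_or_ge j s with h | h
    · exact connL j h1 (by omega)
    · exact connR j (by omega) h2
  -- middles
  have connM : ∀ k, 1 ≤ k → k ≤ n → k ≠ s - 2 → k ≠ s + 2 → zM k ∈ C →
      Conn C p₀ (zM k) := by
    intro k h1 h2 h3 h4 hkC
    rcases Nat.lt_or_ge k 3 with h | h
    · have h6 : k + 2 ≤ n := by omega
      have hA : zA e (k+2) ∈ C := hone _ (by omega) h6 (by omega)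
      exact conn_trans (connA (k+2) (by omega) h6 (by omega))
        (conn_symm (conn_step hkC hA (ka_MA e k)))
    · have hrw : k - 2 + 2 = k := by omega
      have ha := ka_AM e (k-2); rw [hrw] at ha
      have hA : zA e (k-2) ∈ C := hone _ (by omega) (by omega) (by omega)
      exact conn_trans (connA (k-2) (by omega) (by omega) (by omega))
        (conn_step hA hkC ha)
  -- other zigzag
  have connB : ∀ k, 3 ≤ k → k ≤ n - 2 → k ≠ s → zA (e+1) k ∈ C →
      Conn C p₀ (zA (e+1) k) := by
    intro k h1 h2 h3 hkC
    rcases eq_or_ne k (s+4) with rfl | hk1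
    · -- k = s+4
      by_cases hM : zM (s+6) ∈ C
      · have ha := ka_AM (e+1) (s+4)
        exact conn_trans (connM (s+6) (by omega) (by omega) (by omega) (by omega) hM)
          (conn_symm (conn_step hkC hM ha))
      · have hMm : zM (s+6) ∈ bd n \ C :=
          Finset.mem_sdiff.mpr ⟨zM_mem_bd (by omega) (by omega), hM⟩
        by_cases hB3 : zA (e+1) (s+3) ∈ C
        · have hM1 : zM (s+1) ∈ C := inC3 hmiss hsbd htbd hMm (zA_ne_zM _ _ _).symm
            (zA_ne_zM _ _ _).symm (zM_mem_bd (by omega) (by omega))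
            ((zA_ne_zM _ _ _).symm) ((zA_ne_zM _ _ _).symm) (zM_ne_zM (by omega))
          have ha1 := ka_MA (e+1) (s+1)
          have ha2 := ka_AA (e+1) (s+3)
          exact conn_trans (connM (s+1) (by omega) (by omega) (by omega) (by omega) hM1)
            (conn_trans (conn_step hM1 hB3 ha1) (conn_step hB3 hkC ha2))
        · rcases eq_or_ne t (s+3) with rfl | htne
          · -- t = s+3 : use B(s+5) and M(s+3)
            have hB5 : zA (e+1) (s+5) ∈ C := inC3 hmiss hsbd htbd hMm
              (zA_ne_zM _ _ _).symm (zA_ne_zM _ _ _).symm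
              (zA_mem_bd (by omega) (by omega)) (zA_ne_zA_col (by omega))
              (zA_ne_zA_col (by omega)) (zA_ne_zM _ _ _)
            have hM3 : zM (s+3) ∈ C := inC3 hmiss hsbd htbd hMm (zA_ne_zM _ _ _).symm
              (zA_ne_zM _ _ _).symm (zM_mem_bd (by omega) (by omega))
              ((zA_ne_zM _ _ _).symm) ((zA_ne_zM _ _ _).symm) (zM_ne_zM (by omega))
            have ha1 := ka_MA (e+1) (s+3)
            have ha2 := ka_AA (e+1) (s+4)
            exact conn_trans (connM (s+3) (by omega) (by omega) (by omega) (by omega) hM3)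
              (conn_trans (conn_step hM3 hB5 ha1) (conn_symm (conn_step hkC hB5 ha2)))
          · exfalso
            exact not4 hmiss hsbd htbd hMm
              (Finset.mem_sdiff.mpr ⟨zA_mem_bd (by omega) (by omega), hB3⟩) ne_breaks
              (zA_ne_zM _ _ _) (zA_ne_zA_col (by omega)) (zA_ne_zM _ _ _)
              (zA_ne_zA_col htne) ((zA_ne_zM _ _ _).symm)
    rcases eq_or_ne k (s-4) with hk2 | hk2
    · -- k = s-4 (so s ≥ 7)
      subst hk2
      have hs7 : 7 ≤ s := by omega
      by_cases hM : zM (s-6) ∈ C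
      · have hrw : s - 6 + 2 = s - 4 := by omega
        have ha := ka_MA (e+1) (s-6); rw [hrw] at ha
        exact conn_trans (connM (s-6) (by omega) (by omega) (by omega) (by omega) hM)
          (conn_step hM hkC ha)
      · have hMm : zM (s-6) ∈ bd n \ C :=
          Finset.mem_sdiff.mpr ⟨zM_mem_bd (by omega) (by omega), hM⟩
        by_cases hB3 : zA (e+1) (s-3) ∈ C
        · have hM1 : zM (s-1) ∈ C := inC3 hmiss hsbd htbd hMm (zA_ne_zM _ _ _).symm
            (zA_ne_zM _ _ _).symm (zM_mem_bd (by omega) (by omega))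
            ((zA_ne_zM _ _ _).symm) ((zA_ne_zM _ _ _).symm) (zM_ne_zM (by omega))
          have hrw1 : s - 3 + 2 = s - 1 := by omega
          have ha1 := ka_AM (e+1) (s-3); rw [hrw1] at ha1
          have hrw2 : s - 4 + 1 = s - 3 := by omega
          have ha2 := ka_AA (e+1) (s-4); rw [hrw2] at ha2
          exact conn_trans (connM (s-1) (by omega) (by omega) (by omega) (by omega) hM1)
            (conn_trans (conn_symm (conn_step hB3 hM1 ha1))
              (conn_symm (conn_step hkC hB3 ha2)))
        · rcases eq_or_ne t (s-3) with rfl | htne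
          · have hB5 : zA (e+1) (s-5) ∈ C := inC3 hmiss hsbd htbd hMm
              (zA_ne_zM _ _ _).symm (zA_ne_zM _ _ _).symm
              (zA_mem_bd (by omega) (by omega)) (zA_ne_zA_col (by omega))
              (zA_ne_zA_col (by omega)) (zA_ne_zM _ _ _)
            have hM3 : zM (s-3) ∈ C := inC3 hmiss hsbd htbd hMm (zA_ne_zM _ _ _).symm
              (zA_ne_zM _ _ _).symm (zM_mem_bd (by omega) (by omega))
              ((zA_ne_zM _ _ _).symm) ((zA_ne_zM _ _ _).symm) (zM_ne_zM (by omega))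
            have hrw1 : s - 5 + 2 = s - 3 := by omega
            have ha1 := ka_AM (e+1) (s-5); rw [hrw1] at ha1
            have hrw2 : s - 5 + 1 = s - 4 := by omega
            have ha2 := ka_AA (e+1) (s-5); rw [hrw2] at ha2
            exact conn_trans (connM (s-3) (by omega) (by omega) (by omega) (by omega) hM3)
              (conn_trans (conn_symm (conn_step hB5 hM3 ha1)) (conn_step hB5 hkC ha2))
          · exfalso
            exact not4 hmiss hsbd htbd hMm
              (Finset.mem_sdiff.mpr ⟨zA_mem_bd (by omega) (by omega), hB3⟩) ne_breaks
              (zA_ne_zM _ _ _) (zA_ne_zA_col (by omega)) (zA_ne_zM _ _ _)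
              (zA_ne_zA_col htne) ((zA_ne_zM _ _ _).symm)
    · -- generic k : use one of the two adjacent middles
      rcases midOr hmiss hsbd htbd (k1 := k-2) (k2 := k+2) (by omega) (by omega) (by omega)
          (by omega) (by omega) with hM | hM
      · have hrw : k - 2 + 2 = k := by omega
        have ha := ka_MA (e+1) (k-2); rw [hrw] at ha
        exact conn_trans (connM (k-2) (by omega) (by omega) (by omega) (by omega) hM)
          (conn_step hM hkC ha)
      · have ha := ka_AM (e+1) k
        exact conn_trans (connM (k+2) (by omega) (by omega) (by omega) (by omega) hM)
          (conn_symm (conn_step hkC hM ha))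
  -- final assembly
  intro q hq hqZ
  rcases classify e (hC hq) with ⟨k, h1, h2, rfl⟩ | ⟨k, h1, h2, rfl⟩ | ⟨k, h1, h2, rfl⟩
  · rcases eq_or_ne k (s-2) with rfl | hk1
    · exact absurd (by simp) hqZ
    rcases eq_or_ne k (s+2) with rfl | hk2
    · exact absurd (by simp) hqZ
    · exact connM k h1 h2 hk1 hk2 hq
  · rcases eq_or_ne k s with rfl | hk
    · exact absurd hq hs
    · exact connA k h1 h2 hk
  · rcases eq_or_ne k s with rfl | hk
    · exact absurd (by simp) hqZ
    rcases Nat.lt_or_ge k 3 with h | h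
    · exfalso; apply hqZ
      have : k = 1 ∨ k = 2 := by omega
      rcases this with rfl | rfl <;> simp
    rcases Nat.lt_or_ge (n-2) k with h' | h'
    · exfalso; apply hqZ
      have : k = n - 1 ∨ k = n := by omega
      rcases this with rfl | rfl <;> simp
    · exact connB k h h' hk hq

end CaseB

section CaseBII
variable {n : ℕ} {C : Finset (ℕ × ℕ)}

lemma caseBII (hn : 7 ≤ n) (hC : C ⊆ bd n) (hmiss : (bd n \ C).card ≤ 3) (e s t : ℕ)
    (hs1 : 1 ≤ s) (hs3 : s ≤ 3) (hs : zA e s ∉ C)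
    (hone : ∀ j, 1 ≤ j → j ≤ n → j ≠ s → zA e j ∈ C)
    (ht1 : 1 ≤ t) (htn : t ≤ n) (htm : zA (e+1) t ∉ C) :
    ∃ p₀ ∈ C, ∃ Z : Finset (ℕ × ℕ), Z.card ≤ 8 ∧ ∀ q ∈ C, q ∉ Z → Conn C p₀ q := by
  have hsbd : zA e s ∈ bd n \ C :=
    Finset.mem_sdiff.mpr ⟨zA_mem_bd (by omega) (by omega), hs⟩
  have htbd : zA (e+1) t ∈ bd n \ C :=
    Finset.mem_sdiff.mpr ⟨zA_mem_bd ht1 htn, htm⟩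
  set p₀ := zA e n with hp₀
  have hp₀C : p₀ ∈ C := hone n (by omega) le_rfl (by omega)
  refine ⟨p₀, hp₀C, {zA e 1, zA e 2, zA (e+1) 1, zA (e+1) 2, zA (e+1) 3, zM 1,
      zA (e+1) (n-1), zA (e+1) n}, card8le _ _ _ _ _ _ _ _, ?_⟩
  have connA : ∀ j, s + 1 ≤ j → j ≤ n → Conn C p₀ (zA e j) := by
    intro j h1 h2
    exact conn_symm (conn_path (n := n) e j n h2 (by omega) le_rfl
      (fun i hi1 hi2 => hone i (by omega) hi2 (by omega)))
  have connM : ∀ k, 1 ≤ k → k ≤ n → k + 2 ≠ s → zM k ∈ C → Conn C p₀ (zM k) := by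
    intro k h1 h2 h3 hkC
    rcases Nat.lt_or_ge k (s+3) with h | h
    · -- contact at k+2 (note k+2 > s)
      have h6 : k + 2 ≤ n := by omega
      have hA : zA e (k+2) ∈ C := hone _ (by omega) h6 (by omega)
      exact conn_trans (connA (k+2) (by omega) h6)
        (conn_symm (conn_step hkC hA (ka_MA e k)))
    · -- contact at k-2 ≥ s+1
      have hrw : k - 2 + 2 = k := by omega
      have ha := ka_AM e (k-2); rw [hrw] at ha
      have hA : zA e (k-2) ∈ C := hone _ (by omega) (by omega) (by omega)
      exact conn_trans (connA (k-2) (by omega) (by omega)) (conn_step hA hkC ha)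
  have connB : ∀ k, 3 ≤ k → k ≤ n - 2 → k ≠ s → zA (e+1) k ∈ C →
      Conn C p₀ (zA (e+1) k) := by
    intro k h1 h2 h3 hkC
    rcases midOr hmiss hsbd htbd (k1 := k-2) (k2 := k+2) (by omega) (by omega) (by omega)
        (by omega) (by omega) with hM | hM
    · have hrw : k - 2 + 2 = k := by omega
      have ha := ka_MA (e+1) (k-2); rw [hrw] at ha
      have hrw2 : k - 2 + 2 = k := by omega
      exact conn_trans (connM (k-2) (by omega) (by omega) (by omega) hM)
        (conn_step hM hkC ha)
    · have ha := ka_AM (e+1) k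
      exact conn_trans (connM (k+2) (by omega) (by omega) (by omega) hM)
        (conn_symm (conn_step hkC hM ha))
  intro q hq hqZ
  rcases classify e (hC hq) with ⟨k, h1, h2, rfl⟩ | ⟨k, h1, h2, rfl⟩ | ⟨k, h1, h2, rfl⟩
  · rcases eq_or_ne k 1 with rfl | hk1
    · exact absurd (by simp) hqZ
    · exact connM k h1 h2 (by omega) hq
  · rcases Nat.lt_or_ge k 3 with h | h
    · exfalso; apply hqZ
      have : k = 1 ∨ k = 2 := by omega
      rcases this with rfl | rfl <;> simp
    · rcases eq_or_ne k s with rfl | hk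
      · exact absurd hq hs
      · exact connA k (by omega) h2
  · rcases Nat.lt_or_ge k 4 with h | h
    · exfalso; apply hqZ
      have : k = 1 ∨ k = 2 ∨ k = 3 := by omega
      rcases this with rfl | rfl | rfl <;> simp
    rcases Nat.lt_or_ge (n-2) k with h' | h'
    · exfalso; apply hqZ
      have : k = n - 1 ∨ k = n := by omega
      rcases this with rfl | rfl <;> simp
    · exact connB k (by omega) h' (by omega) hq

end CaseBII

section CaseBIII
variable {n : ℕ} {C : Finset (ℕ × ℕ)}

lemma caseBIII (hn : 7 ≤ n) (hC : C ⊆ bd n) (hmiss : (bd n \ C).card ≤ 3) (e s t : ℕ)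
    (hs1 : n - 2 ≤ s) (hs3 : s ≤ n) (hs : zA e s ∉ C)
    (hone : ∀ j, 1 ≤ j → j ≤ n → j ≠ s → zA e j ∈ C)
    (ht1 : 1 ≤ t) (htn : t ≤ n) (htm : zA (e+1) t ∉ C) :
    ∃ p₀ ∈ C, ∃ Z : Finset (ℕ × ℕ), Z.card ≤ 8 ∧ ∀ q ∈ C, q ∉ Z → Conn C p₀ q := by
  have hsbd : zA e s ∈ bd n \ C :=
    Finset.mem_sdiff.mpr ⟨zA_mem_bd (by omega) (by omega), hs⟩
  have htbd : zA (e+1) t ∈ bd n \ C :=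
    Finset.mem_sdiff.mpr ⟨zA_mem_bd ht1 htn, htm⟩
  set p₀ := zA e 1 with hp₀
  have hp₀C : p₀ ∈ C := hone 1 le_rfl (by omega) (by omega)
  refine ⟨p₀, hp₀C, {zA e n, zA e (n-1), zA (e+1) n, zA (e+1) (n-1), zA (e+1) (n-2), zM n,
      zA (e+1) 1, zA (e+1) 2}, card8le _ _ _ _ _ _ _ _, ?_⟩
  have connA : ∀ j, 1 ≤ j → j ≤ s - 1 → Conn C p₀ (zA e j) := by
    intro j h1 h2
    exact conn_path (n := n) e 1 j h1 le_rfl (by omega)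
      (fun i hi1 hi2 => hone i hi1 (by omega) (by omega))
  have connM : ∀ k, 1 ≤ k → k ≤ n → k ≠ s + 2 → zM k ∈ C → Conn C p₀ (zM k) := by
    intro k h1 h2 h3 hkC
    rcases Nat.lt_or_ge k (s-2) with h | h
    · -- contact at k+2 ≤ s-1
      have h6 : k + 2 ≤ s - 1 := by omega
      have hA : zA e (k+2) ∈ C := hone _ (by omega) (by omega) (by omega)
      exact conn_trans (connA (k+2) (by omega) h6)
        (conn_symm (conn_step hkC hA (ka_MA e k)))
    · -- contact at k-2, with k-2 ≤ s-1 and k-2 ≠ s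
      have hrw : k - 2 + 2 = k := by omega
      have ha := ka_AM e (k-2); rw [hrw] at ha
      have hA : zA e (k-2) ∈ C := hone _ (by omega) (by omega) (by omega)
      exact conn_trans (connA (k-2) (by omega) (by omega)) (conn_step hA hkC ha)
  have connB : ∀ k, 3 ≤ k → k ≤ n - 2 → k ≠ s → zA (e+1) k ∈ C →
      Conn C p₀ (zA (e+1) k) := by
    intro k h1 h2 h3 hkC
    rcases midOr hmiss hsbd htbd (k1 := k-2) (k2 := k+2) (by omega) (by omega) (by omega)
        (by omega) (by omega) with hM | hM
    · have hrw : k - 2 + 2 = k := by omega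
      have ha := ka_MA (e+1) (k-2); rw [hrw] at ha
      exact conn_trans (connM (k-2) (by omega) (by omega) (by omega) hM)
        (conn_step hM hkC ha)
    · have ha := ka_AM (e+1) k
      exact conn_trans (connM (k+2) (by omega) (by omega) (by omega) hM)
        (conn_symm (conn_step hkC hM ha))
  intro q hq hqZ
  rcases classify e (hC hq) with ⟨k, h1, h2, rfl⟩ | ⟨k, h1, h2, rfl⟩ | ⟨k, h1, h2, rfl⟩
  · rcases eq_or_ne k (s+2) with hk1 | hk1
    · exfalso; apply hqZ
      have : k = n := by omega
      subst this; simp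
    · exact connM k h1 h2 hk1 hq
  · rcases eq_or_ne k s with rfl | hk
    · exact absurd hq hs
    rcases Nat.lt_or_ge k s with h | h
    · exact connA k h1 (by omega)
    · exfalso; apply hqZ
      have : k = n - 1 ∨ k = n := by omega
      rcases this with rfl | rfl <;> simp
  · rcases Nat.lt_or_ge k 3 with h | h
    · exfalso; apply hqZ
      have : k = 1 ∨ k = 2 := by omega
      rcases this with rfl | rfl <;> simp
    rcases Nat.lt_or_ge (n-3) k with h' | h'
    · exfalso; apply hqZ
      have : k = n - 2 ∨ k = n - 1 ∨ k = n := by omega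
      rcases this with rfl | rfl | rfl <;> simp
    · exact connB k h (by omega) (by omega) hq

end CaseBIII

section Struct
variable {n : ℕ} {C : Finset (ℕ × ℕ)}

lemma zrow_period (e j : ℕ) : zrow (e+2) j = zrow e j := by
  unfold zrow
  have : (j + (e+2)) % 2 = (j + e) % 2 := by omega
  rw [this]

lemma zA_period (e j : ℕ) : zA (e+2) j = zA e j := by
  simp [zA, zrow_period]

/-- dispatch on break position for a one-break backbone -/
lemma caseB_dispatch (hn : 7 ≤ n) (hC : C ⊆ bd n) (hmiss : (bd n \ C).card ≤ 3) (e s t : ℕ)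
    (hs1 : 1 ≤ s) (hsn : s ≤ n) (hs : zA e s ∉ C)
    (hone : ∀ j, 1 ≤ j → j ≤ n → j ≠ s → zA e j ∈ C)
    (ht1 : 1 ≤ t) (htn : t ≤ n) (htm : zA (e+1) t ∉ C) :
    ∃ p₀ ∈ C, ∃ Z : Finset (ℕ × ℕ), Z.card ≤ 8 ∧ ∀ q ∈ C, q ∉ Z → Conn C p₀ q := by
  rcases Nat.lt_or_ge s 4 with h | h
  · exact caseBII hn hC hmiss e s t hs1 (by omega) hs hone ht1 htn htm
  rcases Nat.lt_or_ge (n-3) s with h' | h'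
  · exact caseBIII hn hC hmiss e s t (by omega) hsn hs hone ht1 htn htm
  · exact caseBI hn hC hmiss e s t h h' hs hone ht1 htn htm

theorem struct (hn : 7 ≤ n) (hC : C ⊆ bd n) (hmiss : (bd n \ C).card ≤ 3) :
    ∃ p₀ ∈ C, ∃ Z : Finset (ℕ × ℕ), Z.card ≤ 8 ∧ ∀ q ∈ C, q ∉ Z → Conn C p₀ q := by
  by_cases hA0 : ∀ j, 1 ≤ j → j ≤ n → zA 0 j ∈ C
  · exact caseA hn hC hmiss 0 hA0
  by_cases hA1 : ∀ j, 1 ≤ j → j ≤ n → zA 1 j ∈ C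
  · exact caseA hn hC hmiss 1 hA1
  push_neg at hA0 hA1
  obtain ⟨s0, hs01, hs0n, hs0⟩ := hA0
  obtain ⟨s1, hs11, hs1n, hs1⟩ := hA1
  by_cases h0one : ∀ j, 1 ≤ j → j ≤ n → j ≠ s0 → zA 0 j ∈ C
  · exact caseB_dispatch hn hC hmiss 0 s0 s1 hs01 hs0n hs0 h0one hs11 hs1n hs1
  · push_neg at h0one
    obtain ⟨s0', hs0'1, hs0'n, hs0'ne, hs0'⟩ := h0one
    have h1one : ∀ j, 1 ≤ j → j ≤ n → j ≠ s1 → zA 1 j ∈ C := by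
      intro j hj1 hj2 hj3
      by_contra hj
      have m1 : zA 0 s0 ∈ bd n \ C := Finset.mem_sdiff.mpr ⟨zA_mem_bd hs01 hs0n, hs0⟩
      have m2 : zA 0 s0' ∈ bd n \ C := Finset.mem_sdiff.mpr ⟨zA_mem_bd hs0'1 hs0'n, hs0'⟩
      have m3 : zA 1 s1 ∈ bd n \ C := Finset.mem_sdiff.mpr ⟨zA_mem_bd hs11 hs1n, hs1⟩
      have m4 : zA 1 j ∈ bd n \ C := Finset.mem_sdiff.mpr ⟨zA_mem_bd hj1 hj2, hj⟩
      have ne01 : ∀ x y : ℕ, zA 0 x ≠ zA 1 y := by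
        intro x y
        rcases eq_or_ne x y with rfl | hxy
        · exact zA_ne_zA_row (e := 0)
        · exact zA_ne_zA_col hxy
      exact not4 hmiss m1 m2 m3 m4 (zA_ne_zA_col hs0'ne.symm) (ne01 _ _) (ne01 _ _)
        (ne01 _ _) (ne01 _ _) (zA_ne_zA_col hj3.symm)
    have h2 : zA (1+1) s0 ∉ C := by
      rw [show (1+1 : ℕ) = 0 + 2 by norm_num, zA_period]
      exact hs0
    exact caseB_dispatch hn hC hmiss 1 s1 s0 hs11 hs1n hs1 h1one hs01 hs0n h2

end Struct

section Final
variable {n : ℕ}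

lemma ka_symm {p q : ℕ × ℕ} (h : KnightAttack p q) : KnightAttack q p := by
  unfold KnightAttack at h ⊢
  rw [Nat.dist_comm p.1 q.1, Nat.dist_comm p.2 q.2] at h
  exact h

lemma conn_same {B W : Finset (ℕ × ℕ)} (hdisj : Disjoint B W)
    (hatt : ∀ p ∈ B, ∀ q ∈ W, ¬ KnightAttack p q) {p q : ℕ × ℕ}
    (h : Conn (B ∪ W) p q) : (p ∈ B ↔ q ∈ B) := by
  induction h with
  | rel x y hxy =>
    obtain ⟨hx, hy, ha⟩ := hxy
    constructor
    · intro hxB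
      rcases Finset.mem_union.mp hy with hyB | hyW
      · exact hyB
      · exact absurd ha (hatt x hxB y hyW)
    · intro hyB
      rcases Finset.mem_union.mp hx with hxB | hxW
      · exact hxB
      · exact absurd (ka_symm ha) (hatt y hyB x hxW)
  | refl => exact Iff.rfl
  | symm _ _ _ ih => exact ih.symm
  | trans _ _ _ _ _ ih1 ih2 => exact ih1.trans ih2

lemma onboard_iff {p : ℕ × ℕ} : OnBoard 3 n p ↔ p ∈ bd n := by
  rw [mem_bd]; rfl

theorem upper_bound (hn7 : 7 ≤ n) (hodd : Odd n) (B W : Finset (ℕ × ℕ))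
    (hv : ValidBW 3 n B W) : min B.card W.card ≤ 3 * (n - 3) / 2 + 2 := by
  obtain ⟨hB, hW, hdisj, hatt⟩ := hv
  obtain ⟨m, hm⟩ := hodd
  by_contra hmin
  push_neg at hmin
  have hBc : 3 * m ≤ B.card := by
    have := lt_of_lt_of_le hmin (min_le_left _ _)
    omega
  have hWc : 3 * m ≤ W.card := by
    have := lt_of_lt_of_le hmin (min_le_right _ _)
    omega
  set C := B ∪ W with hCdef
  have hCbd : C ⊆ bd n := by
    intro p hp
    rcases Finset.mem_union.mp hp with h | h
    · exact onboard_iff.mp (hB p h)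
    · exact onboard_iff.mp (hW p h)
  have hCcard : C.card = B.card + W.card := Finset.card_union_of_disjoint hdisj
  have hmiss : (bd n \ C).card ≤ 3 := by
    have h1 := Finset.card_sdiff_add_card_eq_card hCbd
    have h2 := bd_card n
    omega
  obtain ⟨p₀, hp₀, Z, hZ, hconn⟩ := struct hn7 hCbd hmiss
  rcases Finset.mem_union.mp hp₀ with hp₀B | hp₀W
  · have hWZ : W ⊆ Z := by
      intro w hw
      by_contra hwZ
      have hwC : w ∈ C := Finset.mem_union_right _ hw
      have := (conn_same hdisj hatt (hconn w hwC hwZ)).mp hp₀B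
      exact Finset.disjoint_left.mp hdisj this hw
    have := Finset.card_le_card hWZ
    omega
  · have hBZ : B ⊆ Z := by
      intro b hb
      by_contra hbZ
      have hbC : b ∈ C := Finset.mem_union_left _ hb
      have hiff := conn_same hdisj hatt (hconn b hbC hbZ)
      have hp₀nB : p₀ ∉ B := Finset.disjoint_right.mp hdisj hp₀W
      exact hp₀nB (hiff.mpr hb)
    have := Finset.card_le_card hBZ
    omega

theorem existence (hn7 : 7 ≤ n) (hodd : Odd n) :
    ∃ B W : Finset (ℕ × ℕ), ValidBW 3 n B W ∧
      B.card = 3 * (n - 3) / 2 + 2 ∧ W.card = 3 * (n - 3) / 2 + 2 := by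
  obtain ⟨m, hm⟩ := hodd
  have hm3 : 3 ≤ m := by omega
  set a := m - 1 with ha
  have hn2 : n = 2 * a + 3 := by omega
  set Bs := (Finset.Icc 1 3) ×ˢ (Finset.Icc 1 a) ∪ {(1, a+1), (3, a+1)} with hBs
  set Ws := (Finset.Icc 1 3) ×ˢ (Finset.Icc (a+4) n) ∪ {(1, a+3), (3, a+3)} with hWs
  have hmemB : ∀ p : ℕ × ℕ, p ∈ Bs ↔
      ((1 ≤ p.1 ∧ p.1 ≤ 3 ∧ 1 ≤ p.2 ∧ p.2 ≤ a) ∨ p = (1, a+1) ∨ p = (3, a+1)) := by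
    intro p
    simp [hBs, Finset.mem_union, Finset.mem_product]
    tauto
  have hmemW : ∀ p : ℕ × ℕ, p ∈ Ws ↔
      ((1 ≤ p.1 ∧ p.1 ≤ 3 ∧ a + 4 ≤ p.2 ∧ p.2 ≤ n) ∨ p = (1, a+3) ∨ p = (3, a+3)) := by
    intro p
    simp [hWs, Finset.mem_union, Finset.mem_product]
    tauto
  have hBcard : Bs.card = 3 * a + 2 := by
    rw [hBs, Finset.card_union_of_disjoint, Finset.card_product]
    · rw [Finset.card_insert_of_notMem (by simp), Finset.card_singleton]
      simp [Nat.card_Icc]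
    · rw [Finset.disjoint_left]
      intro p hp hp2
      simp [Finset.mem_product] at hp
      simp at hp2
      rcases hp2 with rfl | rfl <;> simp at hp <;> omega
  have hWcard : Ws.card = 3 * a + 2 := by
    rw [hWs, Finset.card_union_of_disjoint, Finset.card_product]
    · rw [Finset.card_insert_of_notMem (by simp), Finset.card_singleton]
      simp [Nat.card_Icc]
      omega
    · rw [Finset.disjoint_left]
      intro p hp hp2
      simp [Finset.mem_product] at hp
      simp at hp2
      rcases hp2 with rfl | rfl <;> simp at hp <;> omega
  have htarget : 3 * (n - 3) / 2 + 2 = 3 * a + 2 := by omega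
  refine ⟨Bs, Ws, ⟨?_, ?_, ?_, ?_⟩, by omega, by omega⟩
  · intro p hp
    rw [hmemB] at hp
    unfold OnBoard
    rcases hp with h | rfl | rfl <;> (try simp) <;> omega
  · intro p hp
    rw [hmemW] at hp
    unfold OnBoard
    rcases hp with h | rfl | rfl <;> (try simp) <;> omega
  · rw [Finset.disjoint_left]
    intro p hp hp2
    rw [hmemB] at hp
    rw [hmemW] at hp2
    have h1 : p.2 ≤ a + 1 := by
      rcases hp with h | rfl | rfl <;> (try simp) <;> omega
    have h2 : a + 3 ≤ p.2 := by
      rcases hp2 with h | rfl | rfl <;> (try simp) <;> omega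
    omega
  · intro p hp q hq hatt
    rw [hmemB] at hp
    rw [hmemW] at hq
    have h1 : p.2 ≤ a ∨ (p.2 = a + 1 ∧ (p.1 = 1 ∨ p.1 = 3)) := by
      rcases hp with h | rfl | rfl <;> (try simp) <;> omega
    have h2 : a + 4 ≤ q.2 ∨ (q.2 = a + 3 ∧ (q.1 = 1 ∨ q.1 = 3)) := by
      rcases hq with h | rfl | rfl <;> (try simp) <;> omega
    unfold KnightAttack Nat.dist at hatt
    omega

end Final
end KnightStruct2

theorem stmt5 (n : ℕ) (hn7 : 7 ≤ n) (hn : Odd n) :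
    (∃ B W : Finset (ℕ × ℕ), ValidBW 3 n B W ∧
      B.card = 3 * (n - 3) / 2 + 2 ∧ W.card = 3 * (n - 3) / 2 + 2) ∧
    ∀ B W : Finset (ℕ × ℕ), ValidBW 3 n B W →
      min B.card W.card ≤ 3 * (n - 3) / 2 + 2 := by
  exact ⟨KnightStruct2.existence hn7 hn,
    fun B W hv => KnightStruct2.upper_bound hn7 hn B W hv⟩
end

section
/- Let n ≥ 1 be an integer. Then there exists a valid black-white coloring (B,W) of the 2×n knight chessboard with |B| = |W| = n, and every valid black-white coloring (B,W) of the 2×n knight chessboard satisfies min(|B|, |W|) ≤ n. -/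
theorem stmt7 (n : ℕ) (hn : 1 ≤ n) :
    (∃ B W : Finset (ℕ × ℕ), ValidBW 2 n B W ∧
      B.card = n ∧ W.card = n) ∧
    ∀ B W : Finset (ℕ × ℕ), ValidBW 2 n B W →
      min B.card W.card ≤ n := by

  constructor
  · refine ⟨(Finset.Icc 1 n).image (fun j => (if (j+2)%4 ≤ 1 then 1 else 2, j)),
      (Finset.Icc 1 n).image (fun j => (if (j+2)%4 ≤ 1 then 2 else 1, j)),
      ⟨?_, ?_, ?_, ?_⟩, ?_, ?_⟩
    · intro p hp
      simp only [Finset.mem_image, Finset.mem_Icc] at hp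
      obtain ⟨j, hj, rfl⟩ := hp
      constructor
      · split <;> simp
      · refine ⟨?_, hj.1, hj.2⟩
        split <;> omega
    · intro p hp
      simp only [Finset.mem_image, Finset.mem_Icc] at hp
      obtain ⟨j, hj, rfl⟩ := hp
      constructor
      · split <;> simp
      · refine ⟨?_, hj.1, hj.2⟩
        split <;> omega
    · rw [Finset.disjoint_left]
      intro p hp hq
      simp only [Finset.mem_image, Finset.mem_Icc] at hp hq
      obtain ⟨j, hj, rfl⟩ := hp
      obtain ⟨j', hj', he⟩ := hq
      have : j' = j := congrArg Prod.snd he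
      subst this
      have := congrArg Prod.fst he
      simp only at this
      split at this <;> omega
    · intro p hp q hq hatt
      simp only [Finset.mem_image, Finset.mem_Icc] at hp hq
      obtain ⟨j, hj, rfl⟩ := hp
      obtain ⟨j', hj', rfl⟩ := hq
      simp only [KnightAttack, Nat.dist] at hatt
      split at hatt <;> split at hatt <;> omega
    · rw [Finset.card_image_of_injective _ (fun a b h => congrArg Prod.snd h)]
      simp [Nat.card_Icc]
    · rw [Finset.card_image_of_injective _ (fun a b h => congrArg Prod.snd h)]
      simp [Nat.card_Icc]
  · intro B W hV
    obtain ⟨hB, hW, hd, -⟩ := hV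
    have hBs : B ⊆ Finset.Icc 1 2 ×ˢ Finset.Icc 1 n := by
      intro p hp
      obtain ⟨h1, h2, h3, h4⟩ := hB p hp
      simp [Finset.mem_product, Finset.mem_Icc]
      omega
    have hWs : W ⊆ Finset.Icc 1 2 ×ˢ Finset.Icc 1 n := by
      intro p hp
      obtain ⟨h1, h2, h3, h4⟩ := hW p hp
      simp [Finset.mem_product, Finset.mem_Icc]
      omega
    have h1 : (B ∪ W).card = B.card + W.card := Finset.card_union_of_disjoint hd
    have h2 : (B ∪ W).card ≤ (Finset.Icc 1 2 ×ˢ Finset.Icc 1 n).card :=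
      Finset.card_le_card (Finset.union_subset hBs hWs)
    have h3 : (Finset.Icc 1 2 ×ˢ Finset.Icc 1 n).card = 2 * n := by
      simp [Finset.card_product, Nat.card_Icc]
    omega
end

section
/- Let m ≥ 7 be an integer, let B be a set of squares of the m×n chessboard, and let k be a column index with 1 ≤ k ≤ n−2. If column k contains at least m−2 squares of B, then at least 2m−4 of the 2m squares lying in columns k+1 and k+2 are attacked by some square of B in column k. -/
private lemma stmt10_L1 (a b m r1 r2 r3 : ℕ) (hm : 7 ≤ m)
    (h1 : 1 ≤ r1 ∧ r1 ≤ m ∧ (2 ≤ r1 → (r1 - 1 = a ∨ r1 - 1 = b)) ∧ (r1 + 1 ≤ m → (r1 + 1 = a ∨ r1 + 1 = b)))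
    (h2 : 1 ≤ r2 ∧ r2 ≤ m ∧ (2 ≤ r2 → (r2 - 1 = a ∨ r2 - 1 = b)) ∧ (r2 + 1 ≤ m → (r2 + 1 = a ∨ r2 + 1 = b)))
    (h3 : 1 ≤ r3 ∧ r3 ≤ m ∧ (2 ≤ r3 → (r3 - 1 = a ∨ r3 - 1 = b)) ∧ (r3 + 1 ≤ m → (r3 + 1 = a ∨ r3 + 1 = b)))
    (h12 : r1 ≠ r2) (h13 : r1 ≠ r3) (h23 : r2 ≠ r3) : False := by omega

private lemma stmt10_L2 (a b m s0 s1 s2 s3 : ℕ) (hm : 7 ≤ m)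
    (h0 : 1 ≤ s0 ∧ s0 ≤ m ∧ (3 ≤ s0 → (s0 - 2 = a ∨ s0 - 2 = b)) ∧ (s0 + 2 ≤ m → (s0 + 2 = a ∨ s0 + 2 = b)))
    (h1 : 1 ≤ s1 ∧ s1 ≤ m ∧ (3 ≤ s1 → (s1 - 2 = a ∨ s1 - 2 = b)) ∧ (s1 + 2 ≤ m → (s1 + 2 = a ∨ s1 + 2 = b)))
    (h2 : 1 ≤ s2 ∧ s2 ≤ m ∧ (3 ≤ s2 → (s2 - 2 = a ∨ s2 - 2 = b)) ∧ (s2 + 2 ≤ m → (s2 + 2 = a ∨ s2 + 2 = b)))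
    (h3 : 1 ≤ s3 ∧ s3 ≤ m ∧ (3 ≤ s3 → (s3 - 2 = a ∨ s3 - 2 = b)) ∧ (s3 + 2 ≤ m → (s3 + 2 = a ∨ s3 + 2 = b)))
    (h01 : s0 ≠ s1) (h02 : s0 ≠ s2) (h03 : s0 ≠ s3)
    (h12 : s1 ≠ s2) (h13 : s1 ≠ s3) (h23 : s2 ≠ s3) : False := by omega

private lemma stmt10_L3 (a b m r1 r2 s1 s2 s3 : ℕ) (hm : 7 ≤ m)
    (g1 : 1 ≤ r1 ∧ r1 ≤ m ∧ (2 ≤ r1 → (r1 - 1 = a ∨ r1 - 1 = b)) ∧ (r1 + 1 ≤ m → (r1 + 1 = a ∨ r1 + 1 = b)))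
    (g2 : 1 ≤ r2 ∧ r2 ≤ m ∧ (2 ≤ r2 → (r2 - 1 = a ∨ r2 - 1 = b)) ∧ (r2 + 1 ≤ m → (r2 + 1 = a ∨ r2 + 1 = b)))
    (h1 : 1 ≤ s1 ∧ s1 ≤ m ∧ (3 ≤ s1 → (s1 - 2 = a ∨ s1 - 2 = b)) ∧ (s1 + 2 ≤ m → (s1 + 2 = a ∨ s1 + 2 = b)))
    (h2 : 1 ≤ s2 ∧ s2 ≤ m ∧ (3 ≤ s2 → (s2 - 2 = a ∨ s2 - 2 = b)) ∧ (s2 + 2 ≤ m → (s2 + 2 = a ∨ s2 + 2 = b)))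
    (h3 : 1 ≤ s3 ∧ s3 ≤ m ∧ (3 ≤ s3 → (s3 - 2 = a ∨ s3 - 2 = b)) ∧ (s3 + 2 ≤ m → (s3 + 2 = a ∨ s3 + 2 = b)))
    (hr : r1 ≠ r2) (h12 : s1 ≠ s2) (h13 : s1 ≠ s3) (h23 : s2 ≠ s3) : False := by omega

theorem stmt10 (m n : ℕ) (hm : 7 ≤ m)
    (B : Finset (ℕ × ℕ)) (hB : ∀ p ∈ B, OnBoard m n p)
    (k : ℕ) (hk1 : 1 ≤ k) (hk2 : k ≤ n - 2)
    (hAF : m - 2 ≤ (col B k).card) :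
    2 * m - 4 ≤
      (((Finset.Icc 1 m) ×ˢ ({k + 1, k + 2} : Finset ℕ)).filter
        (fun q => ∃ p ∈ B, p.2 = k ∧ KnightAttack p q)).card := by
  set S : Finset ℕ := (col B k).image Prod.fst with hSdef
  have hScard : S.card = (col B k).card := by
    apply Finset.card_image_of_injOn
    intro p hp q hq h
    have hp2 : p.2 = k := (Finset.mem_filter.1 hp).2
    have hq2 : q.2 = k := (Finset.mem_filter.1 hq).2
    exact Prod.ext h (hp2.trans hq2.symm)
  have hSsub : S ⊆ Finset.Icc 1 m := by
    intro i hi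
    obtain ⟨p, hp, rfl⟩ := Finset.mem_image.1 hi
    have := hB p (Finset.mem_filter.1 hp).1
    exact Finset.mem_Icc.2 ⟨this.1, this.2.1⟩
  have hSmem : ∀ i ∈ S, (i, k) ∈ B := by
    intro i hi
    obtain ⟨p, hp, rfl⟩ := Finset.mem_image.1 hi
    have hp' := Finset.mem_filter.1 hp
    have hpe : p = (p.1, k) := Prod.ext rfl hp'.2
    exact hpe ▸ hp'.1
  set T : Finset ℕ := Finset.Icc 1 m \ S with hTdef
  have hTcard : T.card ≤ 2 := by
    have h1 : T.card = (Finset.Icc 1 m).card - S.card := Finset.card_sdiff_of_subset hSsub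
    have h2 : (Finset.Icc 1 m).card = m := by simp
    omega
  obtain ⟨a, b, hab⟩ : ∃ a b : ℕ, T ⊆ {a, b} := by
    rcases T.eq_empty_or_nonempty with h | ⟨x, hx⟩
    · exact ⟨0, 0, by simp [h]⟩
    · have hle : (T.erase x).card ≤ 1 := by
        have := Finset.card_erase_of_mem hx; omega
      obtain ⟨y, hy⟩ := Finset.card_le_one_iff_subset_singleton.1 hle
      refine ⟨x, y, fun t ht => ?_⟩
      rcases eq_or_ne t x with rfl | h
      · simp
      · have := hy (Finset.mem_erase.2 ⟨h, ht⟩)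
        simp only [Finset.mem_singleton] at this
        simp [this]
  have hkey : ∀ i, 1 ≤ i → i ≤ m → i ≠ a → i ≠ b → (i, k) ∈ B := by
    intro i h1 h2 ha hb
    apply hSmem
    by_contra hiS
    have hiT : i ∈ T := Finset.mem_sdiff.2 ⟨Finset.mem_Icc.2 ⟨h1, h2⟩, hiS⟩
    have := hab hiT
    simp only [Finset.mem_insert, Finset.mem_singleton] at this
    tauto
  set U1 : Finset ℕ := (Finset.Icc 1 m).filter
      (fun r => ¬ ∃ p ∈ B, p.2 = k ∧ KnightAttack p (r, k + 2)) with hU1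
  set U2 : Finset ℕ := (Finset.Icc 1 m).filter
      (fun r => ¬ ∃ p ∈ B, p.2 = k ∧ KnightAttack p (r, k + 1)) with hU2
  have hP1 : ∀ r ∈ U1, 1 ≤ r ∧ r ≤ m ∧ (2 ≤ r → (r - 1 = a ∨ r - 1 = b)) ∧
      (r + 1 ≤ m → (r + 1 = a ∨ r + 1 = b)) := by
    intro r hr
    have hr' := Finset.mem_filter.1 hr
    have hrm := Finset.mem_Icc.1 hr'.1
    refine ⟨hrm.1, hrm.2, ?_, ?_⟩
    · intro h2
      by_contra hc
      push_neg at hc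
      have hmem := hkey (r - 1) (by omega) (by omega) hc.1 hc.2
      have hatt : KnightAttack (r - 1, k) (r, k + 2) := by
        simp only [KnightAttack, Nat.dist]; omega
      exact hr'.2 ⟨(r - 1, k), hmem, rfl, hatt⟩
    · intro h2
      by_contra hc
      push_neg at hc
      have hmem := hkey (r + 1) (by omega) h2 hc.1 hc.2
      have hatt : KnightAttack (r + 1, k) (r, k + 2) := by
        simp only [KnightAttack, Nat.dist]; omega
      exact hr'.2 ⟨(r + 1, k), hmem, rfl, hatt⟩
  have hP2 : ∀ r ∈ U2, 1 ≤ r ∧ r ≤ m ∧ (3 ≤ r → (r - 2 = a ∨ r - 2 = b)) ∧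
      (r + 2 ≤ m → (r + 2 = a ∨ r + 2 = b)) := by
    intro r hr
    have hr' := Finset.mem_filter.1 hr
    have hrm := Finset.mem_Icc.1 hr'.1
    refine ⟨hrm.1, hrm.2, ?_, ?_⟩
    · intro h2
      by_contra hc
      push_neg at hc
      have hmem := hkey (r - 2) (by omega) (by omega) hc.1 hc.2
      have hatt : KnightAttack (r - 2, k) (r, k + 1) := by
        simp only [KnightAttack, Nat.dist]; omega
      exact hr'.2 ⟨(r - 2, k), hmem, rfl, hatt⟩
    · intro h2
      by_contra hc
      push_neg at hc
      have hmem := hkey (r + 2) (by omega) h2 hc.1 hc.2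
      have hatt : KnightAttack (r + 2, k) (r, k + 1) := by
        simp only [KnightAttack, Nat.dist]; omega
      exact hr'.2 ⟨(r + 2, k), hmem, rfl, hatt⟩
  have hC1 : U1.card ≤ 2 := by
    by_contra hc
    push_neg at hc
    obtain ⟨r1, r2, r3, m1, m2, m3, h12, h13, h23⟩ := Finset.two_lt_card_iff.1 hc
    exact stmt10_L1 a b m r1 r2 r3 hm (hP1 r1 m1) (hP1 r2 m2) (hP1 r3 m3) h12 h13 h23
  have hC2 : U2.card ≤ 3 := by
    by_contra hc
    push_neg at hc
    obtain ⟨x, hx⟩ := Finset.card_pos.1 (by omega : 0 < U2.card)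
    have herase : 2 < (U2.erase x).card := by
      have := Finset.card_erase_of_mem hx; omega
    obtain ⟨r1, r2, r3, m1, m2, m3, h12, h13, h23⟩ := Finset.two_lt_card_iff.1 herase
    have e1 := Finset.mem_erase.1 m1
    have e2 := Finset.mem_erase.1 m2
    have e3 := Finset.mem_erase.1 m3
    exact stmt10_L2 a b m x r1 r2 r3 hm (hP2 x hx) (hP2 r1 e1.2) (hP2 r2 e2.2)
      (hP2 r3 e3.2) (Ne.symm e1.1) (Ne.symm e2.1) (Ne.symm e3.1) h12 h13 h23
  have hC3 : ¬ (2 ≤ U1.card ∧ 3 ≤ U2.card) := by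
    rintro ⟨c1, c2⟩
    obtain ⟨r1, r2, m1, m2, h12⟩ := Finset.one_lt_card_iff.1 (by omega : 1 < U1.card)
    obtain ⟨s1, s2, s3, n1, n2, n3, g12, g13, g23⟩ :=
      Finset.two_lt_card_iff.1 (by omega : 2 < U2.card)
    exact stmt10_L3 a b m r1 r2 s1 s2 s3 hm (hP1 r1 m1) (hP1 r2 m2) (hP2 s1 n1)
      (hP2 s2 n2) (hP2 s3 n3) h12 g12 g13 g23
  set P : Finset (ℕ × ℕ) := (Finset.Icc 1 m) ×ˢ ({k + 1, k + 2} : Finset ℕ) with hP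
  have hPcard : P.card = 2 * m := by
    have h2 : ({k + 1, k + 2} : Finset ℕ).card = 2 := by
      rw [Finset.card_insert_of_notMem (by simp), Finset.card_singleton]
    rw [hP, Finset.card_product, Nat.card_Icc, h2]
    omega
  have hsplit := Finset.card_filter_add_card_filter_not (s := P)
    (p := fun q => ∃ p ∈ B, p.2 = k ∧ KnightAttack p q)
  have hNsub : P.filter (fun q => ¬ ∃ p ∈ B, p.2 = k ∧ KnightAttack p q) ⊆
      U2.image (fun r => (r, k + 1)) ∪ U1.image (fun r => (r, k + 2)) := by
    intro q hq
    have hq' := Finset.mem_filter.1 hq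
    obtain ⟨hq1, hq2⟩ := Finset.mem_product.1 hq'.1
    have hqe : q = (q.1, q.2) := rfl
    rcases Finset.mem_insert.1 hq2 with h | h
    · apply Finset.mem_union_left
      apply Finset.mem_image.2
      refine ⟨q.1, Finset.mem_filter.2 ⟨hq1, ?_⟩, by rw [← h]⟩
      intro hcon
      exact hq'.2 (by rwa [hqe, h])
    · apply Finset.mem_union_right
      apply Finset.mem_image.2
      have h' : q.2 = k + 2 := Finset.mem_singleton.1 h
      refine ⟨q.1, Finset.mem_filter.2 ⟨hq1, ?_⟩, by rw [← h']⟩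
      intro hcon
      exact hq'.2 (by rwa [hqe, h'])
  have hNcard : (P.filter (fun q => ¬ ∃ p ∈ B, p.2 = k ∧ KnightAttack p q)).card ≤ 4 := by
    have h1 := Finset.card_le_card hNsub
    have h2 := Finset.card_union_le (U2.image (fun r => (r, k + 1)))
      (U1.image (fun r => (r, k + 2)))
    have h3 := Finset.card_image_le (s := U2) (f := fun r => (r, k + 1))
    have h4 := Finset.card_image_le (s := U1) (f := fun r => (r, k + 2))
    omega
  have hgoal : (P.filter (fun q => ∃ p ∈ B, p.2 = k ∧ KnightAttack p q)).card +
      (P.filter (fun q => ¬ ∃ p ∈ B, p.2 = k ∧ KnightAttack p q)).card = 2 * m := by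
    rw [hsplit, hPcard]
  omega
end

section
/- Let m and n be integers with 7 ≤ m ≤ n and let (B,W) be a valid black-white coloring of the m×n knight chessboard. Then there exists a valid black-white coloring (B',W') of the m×n knight chessboard with |B'| = |B|, |W'| ≥ |W|, such that the set of column indices whose columns are empty with respect to (B',W') is a set of consecutive integers. -/
namespace Stmt16Aux

lemma dist_eq (a b : ℕ) : Nat.dist a b = a - b + (b - a) := rfl

def Xset (m t : ℕ) (I : Finset ℕ) : Finset (ℕ × ℕ) :=
  ((Finset.Icc 1 m) ×ˢ (Finset.Icc 1 t)) ∪ I ×ˢ {t+1}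

def Yset (m n t : ℕ) (J : Finset ℕ) : Finset (ℕ × ℕ) :=
  J ×ˢ {t+3} ∪ (Finset.Icc 1 m) ×ˢ (Finset.Icc (t+4) n)

lemma mem_Xset {m t : ℕ} {I : Finset ℕ} {p : ℕ × ℕ} :
    p ∈ Xset m t I ↔ ((1 ≤ p.1 ∧ p.1 ≤ m) ∧ (1 ≤ p.2 ∧ p.2 ≤ t)) ∨ (p.1 ∈ I ∧ p.2 = t+1) := by
  simp only [Xset, Finset.mem_union, Finset.mem_product, Finset.mem_Icc, Finset.mem_singleton]

lemma mem_Yset {m n t : ℕ} {J : Finset ℕ} {p : ℕ × ℕ} :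
    p ∈ Yset m n t J ↔ (p.1 ∈ J ∧ p.2 = t+3) ∨ ((1 ≤ p.1 ∧ p.1 ≤ m) ∧ (t+4 ≤ p.2 ∧ p.2 ≤ n)) := by
  simp only [Yset, Finset.mem_union, Finset.mem_product, Finset.mem_Icc, Finset.mem_singleton]

lemma mem_Xset' {m t i k : ℕ} {I : Finset ℕ} :
    (i, k) ∈ Xset m t I ↔ ((1 ≤ i ∧ i ≤ m) ∧ (1 ≤ k ∧ k ≤ t)) ∨ (i ∈ I ∧ k = t+1) :=
  mem_Xset

lemma mem_Yset' {m n t i k : ℕ} {J : Finset ℕ} :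
    (i, k) ∈ Yset m n t J ↔ (i ∈ J ∧ k = t+3) ∨ ((1 ≤ i ∧ i ≤ m) ∧ (t+4 ≤ k ∧ k ≤ n)) :=
  mem_Yset

lemma card_Xset (m t : ℕ) (I : Finset ℕ) : (Xset m t I).card = m * t + I.card := by
  rw [Xset, Finset.card_union_of_disjoint]
  · rw [Finset.card_product]
    have h1 : (Finset.Icc 1 m).card = m := by rw [Nat.card_Icc]; omega
    have h2 : (Finset.Icc 1 t).card = t := by rw [Nat.card_Icc]; omega
    rw [h1, h2, Finset.card_product, Finset.card_singleton, Nat.mul_one]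
  · rw [Finset.disjoint_left]
    rintro p hp hq
    rw [Finset.mem_product] at hp hq
    simp only [Finset.mem_Icc, Finset.mem_singleton] at hp hq
    omega

lemma card_Yset (m n t : ℕ) (J : Finset ℕ) :
    (Yset m n t J).card = J.card + m * (n + 1 - (t+4)) := by
  rw [Yset, Finset.card_union_of_disjoint]
  · rw [Finset.card_product, Finset.card_product, Finset.card_singleton, Nat.mul_one]
    have h1 : (Finset.Icc 1 m).card = m := by rw [Nat.card_Icc]; omega
    rw [h1, Nat.card_Icc]
  · rw [Finset.disjoint_left]
    rintro p hp hq
    rw [Finset.mem_product] at hp hq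
    simp only [Finset.mem_Icc, Finset.mem_singleton] at hp hq
    omega

lemma valid_main {m n t : ℕ} {I J : Finset ℕ} (hm : 1 ≤ m)
    (hI : I ⊆ Finset.Icc 1 m) (hJ : J ⊆ Finset.Icc 1 m) (htn : t + 3 ≤ n)
    (hd : ∀ i ∈ I, ∀ j ∈ J, Nat.dist i j ≠ 1) :
    ValidBW m n (Xset m t I) (Yset m n t J) := by
  refine ⟨?_, ?_, ?_, ?_⟩
  · intro p hp
    rcases mem_Xset.mp hp with ⟨h1, h2⟩ | ⟨h1, h2⟩
    · exact ⟨h1.1, h1.2, h2.1, by omega⟩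
    · have := Finset.mem_Icc.mp (hI h1)
      exact ⟨this.1, this.2, by omega, by omega⟩
  · intro p hp
    rcases mem_Yset.mp hp with ⟨h1, h2⟩ | ⟨h1, h2⟩
    · have := Finset.mem_Icc.mp (hJ h1)
      exact ⟨this.1, this.2, by omega, by omega⟩
    · exact ⟨h1.1, h1.2, by omega, by omega⟩
  · rw [Finset.disjoint_left]
    intro p hp hq
    rcases mem_Xset.mp hp with ⟨_, h2⟩ | ⟨_, h2⟩ <;>
      rcases mem_Yset.mp hq with ⟨_, h4⟩ | ⟨_, h4⟩ <;> omega
  · intro p hp q hq hatt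
    have hpc : p.2 ≤ t + 1 := by
      rcases mem_Xset.mp hp with ⟨_, h2⟩ | ⟨_, h2⟩ <;> omega
    have hqc : t + 3 ≤ q.2 := by
      rcases mem_Yset.mp hq with ⟨_, h2⟩ | ⟨_, h2⟩ <;> omega
    rcases hatt with ⟨hr, hc⟩ | ⟨hr, hc⟩
    · rw [dist_eq] at hr hc
      have hp2 : p.2 = t + 1 := by omega
      have hq2 : q.2 = t + 3 := by omega
      have hpI : p.1 ∈ I := by
        rcases mem_Xset.mp hp with ⟨_, h2⟩ | ⟨h1, _⟩
        · omega
        · exact h1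
      have hqJ : q.1 ∈ J := by
        rcases mem_Yset.mp hq with ⟨h1, _⟩ | ⟨_, h2⟩
        · exact h1
        · omega
      exact hd p.1 hpI q.1 hqJ (by rw [dist_eq]; omega)
    · rw [dist_eq] at hr hc; omega

lemma valid_monoB {m n t : ℕ} {I : Finset ℕ} (hI : I ⊆ Finset.Icc 1 m) (htn : t + 1 ≤ n) :
    ValidBW m n (Xset m t I) (∅ : Finset (ℕ × ℕ)) := by
  refine ⟨?_, by simp, by simp, by simp⟩
  intro p hp
  rcases mem_Xset.mp hp with ⟨h1, h2⟩ | ⟨h1, h2⟩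
  · exact ⟨h1.1, h1.2, h2.1, by omega⟩
  · have := Finset.mem_Icc.mp (hI h1)
    exact ⟨this.1, this.2, by omega, by omega⟩

lemma valid_monoW {m n t : ℕ} {I : Finset ℕ} (hI : I ⊆ Finset.Icc 1 m) (htn : t + 1 ≤ n) :
    ValidBW m n (∅ : Finset (ℕ × ℕ)) (Xset m t I) := by
  refine ⟨by simp, ?_, by simp, by simp⟩
  intro p hp
  rcases mem_Xset.mp hp with ⟨h1, h2⟩ | ⟨h1, h2⟩
  · exact ⟨h1.1, h1.2, h2.1, by omega⟩
  · have := Finset.mem_Icc.mp (hI h1)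
    exact ⟨this.1, this.2, by omega, by omega⟩

def stripeA (ρ : ℕ) : Finset ℕ := (Finset.Icc 1 ρ).image (fun a => 2*a - 1)

def stripeC (m ρ : ℕ) : Finset ℕ := Finset.Icc 1 m \ ((Finset.Icc 1 ρ).image (fun a => 2*a))

lemma card_stripeA (ρ : ℕ) : (stripeA ρ).card = ρ := by
  rw [stripeA, Finset.card_image_of_injOn, Nat.card_Icc]
  · omega
  · intro a ha b hb hab
    simp only [Finset.mem_coe, Finset.mem_Icc] at ha hb
    have h2 : 2*a - 1 = 2*b - 1 := hab
    omega

lemma stripeA_nonempty {ρ : ℕ} (h : 1 ≤ ρ) : (stripeA ρ).Nonempty := by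
  refine ⟨1, ?_⟩
  rw [stripeA, Finset.mem_image]
  exact ⟨1, Finset.mem_Icc.mpr ⟨le_refl 1, h⟩, rfl⟩

lemma stripeA_subset {m ρ : ℕ} (h : 2*ρ ≤ m) : stripeA ρ ⊆ Finset.Icc 1 m := by
  intro x hx
  simp only [stripeA, Finset.mem_image, Finset.mem_Icc] at hx
  obtain ⟨a, ha, rfl⟩ := hx
  exact Finset.mem_Icc.mpr (by omega)

lemma card_stripeC {m ρ : ℕ} (h : 2*ρ ≤ m) : (stripeC m ρ).card = m - ρ := by
  rw [stripeC, Finset.card_sdiff_of_subset]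
  · rw [Finset.card_image_of_injOn, Nat.card_Icc, Nat.card_Icc]
    · omega
    · intro a ha b hb hab
      have h2 : 2*a = 2*b := hab
      omega
  · intro x hx
    simp only [Finset.mem_image, Finset.mem_Icc] at hx
    obtain ⟨a, ha, rfl⟩ := hx
    exact Finset.mem_Icc.mpr (by omega)

lemma stripeC_subset {m ρ : ℕ} : stripeC m ρ ⊆ Finset.Icc 1 m := Finset.sdiff_subset

lemma stripe_dist {m ρ : ℕ} : ∀ i ∈ stripeA ρ, ∀ j ∈ stripeC m ρ, Nat.dist i j ≠ 1 := by
  intro i hi j hj hdist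
  simp only [stripeA, Finset.mem_image, Finset.mem_Icc] at hi
  obtain ⟨a, ha, rfl⟩ := hi
  simp only [stripeC, Finset.mem_sdiff, Finset.mem_image, Finset.mem_Icc, not_exists, not_and] at hj
  obtain ⟨⟨hj1, hj2⟩, hj3⟩ := hj
  rw [dist_eq] at hdist
  have h1 := hj3 a
  have h2 := hj3 (a-1)
  omega

lemma empty_main {m n t : ℕ} {I J : Finset ℕ} (hm : 1 ≤ m) (hIne : I.Nonempty)
    (htn : t + 3 ≤ n) :
    {k : ℕ | 1 ≤ k ∧ k ≤ n ∧ ∀ i, (i, k) ∉ Xset m t I ∧ (i, k) ∉ Yset m n t J}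
      = Set.Icc (t+2) (if J.Nonempty then t+2 else t+3) := by
  classical
  obtain ⟨i0, hi0⟩ := hIne
  ext k
  simp only [Set.mem_setOf_eq, Set.mem_Icc]
  constructor
  · rintro ⟨hk1, hkn, h⟩
    have hXa : ¬ (k ≤ t) := by
      intro hle
      exact (h 1).1 (mem_Xset'.mpr (Or.inl ⟨⟨le_refl 1, hm⟩, hk1, hle⟩))
    have hXb : k ≠ t + 1 := by
      intro heq
      exact (h i0).1 (mem_Xset'.mpr (Or.inr ⟨hi0, heq⟩))
    have hYb : ¬ (t + 4 ≤ k) := by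
      intro hle
      exact (h 1).2 (mem_Yset'.mpr (Or.inr ⟨⟨le_refl 1, hm⟩, hle, hkn⟩))
    by_cases hJ : J.Nonempty
    · obtain ⟨j0, hj0⟩ := hJ
      have hYa : k ≠ t + 3 := fun heq => (h j0).2 (mem_Yset'.mpr (Or.inl ⟨hj0, heq⟩))
      rw [if_pos ⟨j0, hj0⟩]
      omega
    · rw [if_neg hJ]
      omega
  · intro hk
    have hkb : t + 2 ≤ k ∧ k ≤ t + 3 := by
      by_cases hJ : J.Nonempty
      · rw [if_pos hJ] at hk; omega
      · rw [if_neg hJ] at hk; omega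
    have hknot3 : J.Nonempty → k ≠ t + 3 := by
      intro hJ; rw [if_pos hJ] at hk; omega
    refine ⟨by omega, by omega, fun i => ⟨?_, ?_⟩⟩
    · intro hmem
      rcases mem_Xset'.mp hmem with ⟨_, h2⟩ | ⟨_, h2⟩ <;> omega
    · intro hmem
      rcases mem_Yset'.mp hmem with ⟨hj, h2⟩ | ⟨_, h2⟩
      · exact hknot3 ⟨i, hj⟩ h2
      · omega

lemma empty_monoB {m n t : ℕ} {I : Finset ℕ} (hm : 1 ≤ m) (hIne : I.Nonempty)
    (htn : t + 1 ≤ n) :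
    {k : ℕ | 1 ≤ k ∧ k ≤ n ∧ ∀ i, (i, k) ∉ Xset m t I ∧ (i, k) ∉ (∅ : Finset (ℕ × ℕ))}
      = Set.Icc (t+2) n := by
  obtain ⟨i0, hi0⟩ := hIne
  ext k
  simp only [Set.mem_setOf_eq, Set.mem_Icc, Finset.notMem_empty, not_false_iff, and_true]
  constructor
  · rintro ⟨hk1, hkn, h⟩
    have hXa : ¬ (k ≤ t) := by
      intro hle
      exact (h 1) (mem_Xset'.mpr (Or.inl ⟨⟨le_refl 1, hm⟩, hk1, hle⟩))
    have hXb : k ≠ t + 1 := by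
      intro heq
      exact (h i0) (mem_Xset'.mpr (Or.inr ⟨hi0, heq⟩))
    omega
  · intro hk
    refine ⟨by omega, by omega, fun i hmem => ?_⟩
    rcases mem_Xset'.mp hmem with ⟨_, h2⟩ | ⟨_, h2⟩ <;> omega

lemma empty_monoW {m n t : ℕ} {I : Finset ℕ} (hm : 1 ≤ m) (hIne : I.Nonempty)
    (htn : t + 1 ≤ n) :
    {k : ℕ | 1 ≤ k ∧ k ≤ n ∧ ∀ i, (i, k) ∉ (∅ : Finset (ℕ × ℕ)) ∧ (i, k) ∉ Xset m t I}
      = Set.Icc (t+2) n := by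
  obtain ⟨i0, hi0⟩ := hIne
  ext k
  simp only [Set.mem_setOf_eq, Set.mem_Icc, Finset.notMem_empty, not_false_iff, true_and]
  constructor
  · rintro ⟨hk1, hkn, h⟩
    have hXa : ¬ (k ≤ t) := by
      intro hle
      exact (h 1) (mem_Xset'.mpr (Or.inl ⟨⟨le_refl 1, hm⟩, hk1, hle⟩))
    have hXb : k ≠ t + 1 := by
      intro heq
      exact (h i0) (mem_Xset'.mpr (Or.inr ⟨hi0, heq⟩))
    omega
  · intro hk
    refine ⟨by omega, by omega, fun i hmem => ?_⟩
    rcases mem_Xset'.mp hmem with ⟨_, h2⟩ | ⟨_, h2⟩ <;> omega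

end Stmt16Aux
open Stmt16Aux in
theorem stmt16 (m n : ℕ) (hm : 7 ≤ m) (hmn : m ≤ n)
    (B W : Finset (ℕ × ℕ)) (hBW : ValidBW m n B W) :
    ∃ B' W' : Finset (ℕ × ℕ), ValidBW m n B' W' ∧
      B'.card = B.card ∧ W.card ≤ W'.card ∧
      ∃ a b : ℕ,
        {k : ℕ | 1 ≤ k ∧ k ≤ n ∧ ∀ i, (i, k) ∉ B' ∧ (i, k) ∉ W'} =
          Set.Icc a b := by
  obtain ⟨hBb, hWb, hDisj, hAtt⟩ := hBW
  have hm1 : 1 ≤ m := by omega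
  by_cases htwo : ∃ k1 k2 : ℕ, k1 ≠ k2 ∧
      (1 ≤ k1 ∧ k1 ≤ n ∧ ∀ i, (i, k1) ∉ B ∧ (i, k1) ∉ W) ∧
      (1 ≤ k2 ∧ k2 ≤ n ∧ ∀ i, (i, k2) ∉ B ∧ (i, k2) ∉ W)
  case neg =>
    -- at most one empty column : keep (B, W)
    refine ⟨B, W, ⟨hBb, hWb, hDisj, hAtt⟩, rfl, le_refl _, ?_⟩
    by_cases hone : ∃ k0 : ℕ, 1 ≤ k0 ∧ k0 ≤ n ∧ ∀ i, (i, k0) ∉ B ∧ (i, k0) ∉ W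
    · obtain ⟨k0, hk0⟩ := hone
      refine ⟨k0, k0, ?_⟩
      ext k
      simp only [Set.mem_setOf_eq, Set.mem_Icc]
      constructor
      · intro hk
        by_cases hkk : k = k0
        · omega
        · exact absurd ⟨k, k0, hkk, hk, hk0⟩ htwo
      · intro hk
        have hkk : k = k0 := by omega
        subst hkk
        exact hk0
    · refine ⟨1, 0, ?_⟩
      rw [Set.Icc_eq_empty (by omega)]
      ext k
      simp only [Set.mem_setOf_eq, Set.mem_empty_iff_false, iff_false]
      intro hk
      exact hone ⟨k, hk⟩
  case pos =>
    -- at least two empty columns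
    obtain ⟨k1, k2, hk12, hk1', hk2'⟩ := htwo
    -- counting : c + w + 2m ≤ mn
    have hBWsub : B ∪ W ⊆ (Finset.Icc 1 m) ×ˢ (((Finset.Icc 1 n).erase k1).erase k2) := by
      intro p hp
      have hob : OnBoard m n p := by
        rcases Finset.mem_union.mp hp with h | h
        · exact hBb _ h
        · exact hWb _ h
      have hpk1 : p.2 ≠ k1 := by
        intro he
        rcases Finset.mem_union.mp hp with h | h
        · have hp' : (p.1, p.2) ∈ B := h
          rw [he] at hp'
          exact (hk1'.2.2 p.1).1 hp'
        · have hp' : (p.1, p.2) ∈ W := h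
          rw [he] at hp'
          exact (hk1'.2.2 p.1).2 hp'
      have hpk2 : p.2 ≠ k2 := by
        intro he
        rcases Finset.mem_union.mp hp with h | h
        · have hp' : (p.1, p.2) ∈ B := h
          rw [he] at hp'
          exact (hk2'.2.2 p.1).1 hp'
        · have hp' : (p.1, p.2) ∈ W := h
          rw [he] at hp'
          exact (hk2'.2.2 p.1).2 hp'
      rw [Finset.mem_product]
      exact ⟨Finset.mem_Icc.mpr ⟨hob.1, hob.2.1⟩,
        Finset.mem_erase.mpr ⟨hpk2, Finset.mem_erase.mpr
          ⟨hpk1, Finset.mem_Icc.mpr ⟨hob.2.2.1, hob.2.2.2⟩⟩⟩⟩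
    have hcount : B.card + W.card + 2 * m ≤ m * n := by
      have h1 := Finset.card_le_card hBWsub
      rw [Finset.card_union_of_disjoint hDisj, Finset.card_product] at h1
      have hk2mem : k2 ∈ (Finset.Icc 1 n).erase k1 :=
        Finset.mem_erase.mpr ⟨fun h => hk12 h.symm, Finset.mem_Icc.mpr ⟨hk2'.1, hk2'.2.1⟩⟩
      have hc1 : ((Finset.Icc 1 n).erase k1).card = n - 1 := by
        rw [Finset.card_erase_of_mem (Finset.mem_Icc.mpr ⟨hk1'.1, hk1'.2.1⟩), Nat.card_Icc]
        omega
      have hc2 : (((Finset.Icc 1 n).erase k1).erase k2).card = n - 2 := by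
        rw [Finset.card_erase_of_mem hk2mem, hc1]
        omega
      have hIcc : (Finset.Icc 1 m).card = m := by rw [Nat.card_Icc]; omega
      rw [hc2, hIcc] at h1
      have hn2 : 2 ≤ n := by
        have ha := hk1'.1; have hb := hk1'.2.1
        have hc := hk2'.1; have hd := hk2'.2.1
        omega
      obtain ⟨d, hd⟩ : ∃ d, n = d + 2 := ⟨n - 2, by omega⟩
      subst hd
      have he1 : m * (d + 2 - 2) = m * d := by norm_num
      rw [he1] at h1
      have he2 : m * (d + 2) = m * d + 2 * m := by ring
      omega
    by_cases hB0 : B = ∅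
    · by_cases hW0 : W = ∅
      · -- both empty : take everything empty
        refine ⟨∅, ∅, ⟨by simp, by simp, by simp, by simp⟩,
          by rw [hB0], by rw [hW0], 1, n, ?_⟩
        ext k
        simp only [Set.mem_setOf_eq, Set.mem_Icc, Finset.notMem_empty, not_false_iff,
          and_self, implies_true, and_true]
      · -- B empty, W nonempty : pack W
        have hw1 : 1 ≤ W.card := Finset.card_pos.mpr (Finset.nonempty_iff_ne_empty.mpr hW0)
        have hwmn : W.card ≤ m * n := by
          have hsub : W ⊆ (Finset.Icc 1 m) ×ˢ (Finset.Icc 1 n) := by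
            intro p hp
            have hob := hWb _ hp
            rw [Finset.mem_product]
            exact ⟨Finset.mem_Icc.mpr ⟨hob.1, hob.2.1⟩, Finset.mem_Icc.mpr ⟨hob.2.2.1, hob.2.2.2⟩⟩
          have h2 := Finset.card_le_card hsub
          rw [Finset.card_product, Nat.card_Icc, Nat.card_Icc] at h2
          have he : (m + 1 - 1) * (n + 1 - 1) = m * n := by
            have h3 : m + 1 - 1 = m := by omega
            have h4 : n + 1 - 1 = n := by omega
            rw [h3, h4]
          rw [he] at h2
          exact h2
        obtain ⟨t, ρ, hρ1, hρm, hceq⟩ : ∃ t ρ, 1 ≤ ρ ∧ ρ ≤ m ∧ W.card = m * t + ρ := by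
          refine ⟨(W.card - 1)/m, W.card - m * ((W.card - 1)/m), ?_, ?_, ?_⟩ <;>
          · have h1 := Nat.div_add_mod (W.card - 1) m
            have h2 : (W.card - 1) % m < m := Nat.mod_lt _ (by omega)
            omega
        have htn : t < n := by
          have hlt : m * t < m * n := by omega
          exact Nat.lt_of_mul_lt_mul_left hlt
        refine ⟨∅, Xset m t (Finset.Icc 1 ρ),
          valid_monoW (Finset.Icc_subset_Icc le_rfl hρm) (by omega),
          by rw [hB0], ?_, t+2, n, ?_⟩
        · rw [card_Xset, Nat.card_Icc]
          omega
        · exact empty_monoW hm1 ⟨1, Finset.mem_Icc.mpr ⟨le_rfl, hρ1⟩⟩ (by omega)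
    · by_cases hW0 : W = ∅
      · -- W empty, B nonempty : pack B
        have hb1 : 1 ≤ B.card := Finset.card_pos.mpr (Finset.nonempty_iff_ne_empty.mpr hB0)
        have hbmn : B.card ≤ m * n := by
          have hsub : B ⊆ (Finset.Icc 1 m) ×ˢ (Finset.Icc 1 n) := by
            intro p hp
            have hob := hBb _ hp
            rw [Finset.mem_product]
            exact ⟨Finset.mem_Icc.mpr ⟨hob.1, hob.2.1⟩, Finset.mem_Icc.mpr ⟨hob.2.2.1, hob.2.2.2⟩⟩
          have h2 := Finset.card_le_card hsub
          rw [Finset.card_product, Nat.card_Icc, Nat.card_Icc] at h2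
          have he : (m + 1 - 1) * (n + 1 - 1) = m * n := by
            have h3 : m + 1 - 1 = m := by omega
            have h4 : n + 1 - 1 = n := by omega
            rw [h3, h4]
          rw [he] at h2
          exact h2
        obtain ⟨t, ρ, hρ1, hρm, hceq⟩ : ∃ t ρ, 1 ≤ ρ ∧ ρ ≤ m ∧ B.card = m * t + ρ := by
          refine ⟨(B.card - 1)/m, B.card - m * ((B.card - 1)/m), ?_, ?_, ?_⟩ <;>
          · have h1 := Nat.div_add_mod (B.card - 1) m
            have h2 : (B.card - 1) % m < m := Nat.mod_lt _ (by omega)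
            omega
        have htn : t < n := by
          have hlt : m * t < m * n := by omega
          exact Nat.lt_of_mul_lt_mul_left hlt
        refine ⟨Xset m t (Finset.Icc 1 ρ), ∅,
          valid_monoB (Finset.Icc_subset_Icc le_rfl hρm) (by omega),
          ?_, by rw [hW0], t+2, n, ?_⟩
        · rw [card_Xset, Nat.card_Icc]
          omega
        · exact empty_monoB hm1 ⟨1, Finset.mem_Icc.mpr ⟨le_rfl, hρ1⟩⟩ (by omega)
      · -- both nonempty : two-sided construction
        have hb1 : 1 ≤ B.card := Finset.card_pos.mpr (Finset.nonempty_iff_ne_empty.mpr hB0)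
        have hw1 : 1 ≤ W.card := Finset.card_pos.mpr (Finset.nonempty_iff_ne_empty.mpr hW0)
        obtain ⟨t, ρ, hρ1, hρm, hceq⟩ : ∃ t ρ, 1 ≤ ρ ∧ ρ ≤ m ∧ B.card = m * t + ρ := by
          refine ⟨(B.card - 1)/m, B.card - m * ((B.card - 1)/m), ?_, ?_, ?_⟩ <;>
          · have h1 := Nat.div_add_mod (B.card - 1) m
            have h2 : (B.card - 1) % m < m := Nat.mod_lt _ (by omega)
            omega
        have htn : t + 3 ≤ n := by
          have hlt : m * (t + 2) < m * n := by
            have he : m * (t + 2) = m * t + 2 * m := by ring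
            omega
          have := Nat.lt_of_mul_lt_mul_left hlt
          omega
        obtain ⟨d, hd⟩ : ∃ d, n = t + 3 + d := ⟨n - (t + 3), by omega⟩
        have hmn2 : m * n = m * t + 3 * m + m * d := by rw [hd]; ring
        have hcap : n + 1 - (t + 4) = d := by omega
        by_cases hpar : 2 * ρ ≤ m
        · refine ⟨Xset m t (stripeA ρ), Yset m n t (stripeC m ρ),
            valid_main hm1 (stripeA_subset hpar) stripeC_subset htn stripe_dist,
            ?_, ?_, t+2, if (stripeC m ρ).Nonempty then t+2 else t+3, ?_⟩
          · rw [card_Xset, card_stripeA]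
            omega
          · rw [card_Yset, card_stripeC hpar, hcap]
            omega
          · exact empty_main hm1 (stripeA_nonempty hρ1) htn
        · have hσ : 2 * (m - ρ) ≤ m := by omega
          refine ⟨Xset m t (stripeC m (m - ρ)), Yset m n t (stripeA (m - ρ)),
            valid_main hm1 stripeC_subset (stripeA_subset hσ) htn
              (fun i hi j hj => by rw [Nat.dist_comm]; exact stripe_dist j hj i hi),
            ?_, ?_, t+2, if (stripeA (m - ρ)).Nonempty then t+2 else t+3, ?_⟩
          · rw [card_Xset, card_stripeC hσ]
            omega
          · rw [card_Yset, card_stripeA, hcap]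
            omega
          · refine empty_main hm1 ?_ htn
            rw [← Finset.card_pos, card_stripeC hσ]
            omega
end
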